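/- arXiv:2403.02298 — 7 statements merged into one kernel-verified Lean document; each statement's English description precedes it below -/
import Mathlib

section
/- Let D be a digraph. Then there exists a total order ≺ on V(D) such that every vertex v has degree at most ⌊deg_D(v)/2⌋ in the backedge graph D[≺], where deg_D(v) is the total degree (in-degree plus out-degree) of v in D. -/
open Set

variable {V : Type*}

/-- A directed cycle within a set `S` under arc relation `A`. -/
def DiCycleIn (A : V → V → Prop) (S : Set V) : Prop :=
  ∃ (n : ℕ) (f : Fin (n + 1) → V), Function.Injective f ∧ (∀ i, f i ∈ S) ∧
    ∀ i, A (f i) (f (i + 1))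

/-- `S` induces an acyclic subdigraph of the digraph with arc relation `A`. -/
def AcyclicSet (A : V → V → Prop) (S : Set V) : Prop := ¬ DiCycleIn A S

/-- A `k`-dicolouring: every colour class is acyclic. -/
def Dicolourable (A : V → V → Prop) (k : ℕ) : Prop :=
  ∃ φ : V → Fin k, ∀ c, AcyclicSet A {v | φ v = c}

/-- Dichromatic number of a digraph. -/
noncomputable def dichrNum (A : V → V → Prop) : ℕ := sInf {k | Dicolourable A k}

/-- Chromatic number of a simple graph, as a natural number. -/
noncomputable def chrNum (G : SimpleGraph V) : ℕ := sInf {k | G.Colorable k}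

/-- `A` is an orientation of the simple graph `G`. -/
def IsOrientation (G : SimpleGraph V) (A : V → V → Prop) : Prop :=
  (∀ u v, G.Adj u v ↔ A u v ∨ A v u) ∧ ∀ u v, A u v → ¬ A v u

/-- The maximum dichromatic number over all orientations of `G`. -/
noncomputable def maxDichr (G : SimpleGraph V) : ℕ :=
  sSup {k | ∃ A : V → V → Prop, IsOrientation G A ∧ dichrNum A = k}

/-- The backedge graph of a digraph `A` with respect to a total order `L`. -/
def backedge (A : V → V → Prop) (L : LinearOrder V) : SimpleGraph V where
  Adj u v := (A v u ∧ L.lt u v) ∨ (A u v ∧ L.lt v u)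
  symm := ⟨by intro u v h; tauto⟩
  loopless := ⟨by
    intro u h
    rcases h with ⟨_, h⟩ | ⟨_, h⟩ <;> exact @lt_irrefl V L.toPreorder u h⟩

/-- An oriented graph: no pair of opposite arcs (hence no loops). -/
def Oriented (A : V → V → Prop) : Prop := ∀ u v, A u v → ¬ A v u

/-- The underlying graph of the digraph `A` is triangle-free. -/
def TriangleFreeDi (A : V → V → Prop) : Prop :=
  ∀ a b c : V, (A a b ∨ A b a) → (A b c ∨ A c b) → (A a c ∨ A c a) → False

/-- A directed linear forest: in- and out-degrees at most one, and no directed cycle. -/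
def IsDilinForest (B : V → V → Prop) : Prop :=
  (∀ u v w, B u v → B u w → v = w) ∧ (∀ u v w, B u w → B v w → u = v) ∧
    AcyclicSet B Set.univ

/-- The number of arcs of a digraph. -/
noncomputable def arcCount (B : V → V → Prop) : ℕ := Set.ncard {p : V × V | B p.1 p.2}

/-- The maximum number of arcs of a directed linear forest subdigraph of `A`. -/
noncomputable def linArcs (A : V → V → Prop) : ℕ :=
  sSup {m | ∃ B : V → V → Prop, (∀ u v, B u v → A u v) ∧ IsDilinForest B ∧ arcCount B = m}

/-- Independence number of a simple graph. -/
noncomputable def indepNum (G : SimpleGraph V) : ℕ :=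
  sSup {k | ∃ S : Set V, (∀ u ∈ S, ∀ v ∈ S, ¬ G.Adj u v) ∧ S.ncard = k}

/-- The `n`-backward-blowup of a digraph `A`. -/
def backBlowup (A : V → V → Prop) (n : ℕ) : V × Fin n → V × Fin n → Prop :=
  fun p q => (A p.1 q.1 ∧ p.2 = q.2) ∨ (A q.1 p.1 ∧ p.2 ≠ q.2)

/-!
Rank the vertices injectively so as to minimise the number of arcs pointing downwards. Moving a
single vertex `v` to the very bottom (resp. top) changes only the arcs at `v`, and afterwards the
downward arcs at `v` are among its in-arcs (resp. out-arcs). By minimality the number `b` of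
downward arcs at `v` is thus at most both the in-degree and the out-degree of `v`, so `2b` is at
most its total degree; and `b` is the degree of `v` in the backedge graph of the induced order.
-/

open Function

section BackArcs

variable {α : Type*} [LinearOrder α] (A : V → V → Prop)

def backArcs (f : V → α) : Set (V × V) := {p | A p.1 p.2 ∧ f p.2 < f p.1}

def backOut (f : V → α) (v : V) : Set V := {u | A v u ∧ f u < f v}

def backIn (f : V → α) (v : V) : Set V := {u | A u v ∧ f v < f u}

noncomputable def backDegree (f : V → α) (v : V) : ℕ :=
  (backOut A f v).ncard + (backIn A f v).ncard

lemma backArcs_eq_union (f : V → α) (v : V) :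
    backArcs A f = {p ∈ backArcs A f | p.1 ≠ v ∧ p.2 ≠ v} ∪
      (Prod.mk v '' backOut A f v ∪ (·, v) '' backIn A f v) := by
  ext ⟨a, b⟩
  simp only [backArcs, backOut, backIn, mem_union, mem_ofPred_eq, mem_image, Prod.mk.injEq]
  constructor
  · intro h
    by_cases ha : a = v
    · subst ha; exact Or.inr (Or.inl ⟨b, h, rfl, rfl⟩)
    by_cases hb : b = v
    · subst hb; exact Or.inr (Or.inr ⟨a, h, rfl, rfl⟩)
    exact Or.inl ⟨h, ha, hb⟩
  · rintro (⟨h, -⟩ | ⟨u, h, rfl, rfl⟩ | ⟨u, h, rfl, rfl⟩) <;> exact h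

lemma ncard_backArcs [Finite V] (f : V → α) (v : V) :
    (backArcs A f).ncard = {p ∈ backArcs A f | p.1 ≠ v ∧ p.2 ≠ v}.ncard + backDegree A f v := by
  have hdisj : Disjoint (Prod.mk v '' backOut A f v) ((·, v) '' backIn A f v) := by
    rw [disjoint_left]
    rintro _ ⟨u, hu, rfl⟩ ⟨w, -, hw⟩
    obtain ⟨rfl, rfl⟩ := Prod.mk.inj hw
    exact lt_irrefl _ hu.2
  have hdisj' : Disjoint {p ∈ backArcs A f | p.1 ≠ v ∧ p.2 ≠ v}
      (Prod.mk v '' backOut A f v ∪ (·, v) '' backIn A f v) := by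
    rw [disjoint_union_right]
    constructor <;> rw [disjoint_left] <;> rintro _ ⟨-, h1, h2⟩ ⟨u, -, rfl⟩
    exacts [h1 rfl, h2 rfl]
  conv_lhs => rw [backArcs_eq_union A f v]
  rw [ncard_union_eq hdisj', ncard_union_eq hdisj,
    ncard_image_of_injective _ (Prod.mk_right_injective v),
    ncard_image_of_injective _ (Prod.mk_left_injective v), backDegree]

lemma backArcs_away_eq_of_eqOn {f g : V → α} {v : V} (hfg : ∀ u ≠ v, g u = f u) :
    {p ∈ backArcs A g | p.1 ≠ v ∧ p.2 ≠ v} = {p ∈ backArcs A f | p.1 ≠ v ∧ p.2 ≠ v} := by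
  ext ⟨a, b⟩
  simp only [backArcs, mem_ofPred_eq]
  constructor <;> rintro ⟨hab, ha, hb⟩ <;> simp_all

lemma ncard_backArcs_add_backDegree [Finite V] {f g : V → α} {v : V}
    (hfg : ∀ u ≠ v, g u = f u) :
    (backArcs A g).ncard + backDegree A f v = (backArcs A f).ncard + backDegree A g v := by
  rw [ncard_backArcs A g v, ncard_backArcs A f v, backArcs_away_eq_of_eqOn A hfg]
  ring

lemma backDegree_le_ncard_in {f : V → α} {v : V} [Finite V] (hv : ∀ u ≠ v, f v < f u) :
    backDegree A f v ≤ {u | A u v}.ncard := by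
  have hout : backOut A f v = ∅ := by
    refine eq_empty_of_forall_notMem fun u ⟨_, hu⟩ => ?_
    obtain rfl | hne := eq_or_ne u v
    exacts [lt_irrefl _ hu, (hv u hne).not_gt hu]
  rw [backDegree, hout, ncard_empty, zero_add]
  exact ncard_le_ncard fun u hu => hu.1

lemma backDegree_le_ncard_out {f : V → α} {v : V} [Finite V] (hv : ∀ u ≠ v, f u < f v) :
    backDegree A f v ≤ {u | A v u}.ncard := by
  have hin : backIn A f v = ∅ := by
    refine eq_empty_of_forall_notMem fun u ⟨_, hu⟩ => ?_
    obtain rfl | hne := eq_or_ne u v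
    exacts [lt_irrefl _ hu, (hv u hne).not_gt hu]
  rw [backDegree, hin, ncard_empty, add_zero]
  exact ncard_le_ncard fun u hu => hu.1

lemma backDegree_le_of_ncard_backArcs_le [Finite V] {f g : V → α} {v : V}
    (hfg : ∀ u ≠ v, g u = f u) (hmin : (backArcs A f).ncard ≤ (backArcs A g).ncard) :
    backDegree A f v ≤ backDegree A g v := by
  have := ncard_backArcs_add_backDegree A hfg
  omega

lemma neighborSet_backedge_lift' {f : V → α} (hf : Injective f) (v : V) :
    (backedge A (LinearOrder.lift' f hf)).neighborSet v = backIn A f v ∪ backOut A f v :=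
  rfl

end BackArcs

lemma Function.Injective.update_of_forall_ne {α : Type*} [DecidableEq V] {f : V → α}
    (hf : Injective f) {v : V} {c : α} (hc : ∀ u ≠ v, f u ≠ c) : Injective (update f v c) := by
  intro a b hab
  by_cases ha : a = v <;> by_cases hb : b = v
  · rw [ha, hb]
  · rw [ha, update_self, update_of_ne hb] at hab
    exact absurd hab.symm (hc b hb)
  · rw [hb, update_self, update_of_ne ha] at hab
    exact absurd hab (hc a ha)
  · rwa [update_of_ne ha, update_of_ne hb, hf.eq_iff] at hab

lemma exists_injective_forall_ncard_backArcs_le [Countable V] (A : V → V → Prop) :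
    ∃ f : V → ℤ, Injective f ∧
      ∀ g : V → ℤ, Injective g → (backArcs A f).ncard ≤ (backArcs A g).ncard := by
  obtain ⟨e, he⟩ := Countable.exists_injective_nat V
  obtain ⟨f, hf, hmin⟩ := (measure fun f : V → ℤ => (backArcs A f).ncard).wf.has_min
    {f | Injective f} ⟨_, Nat.cast_injective.comp he⟩
  exact ⟨f, hf, fun g hg => not_lt.1 (hmin g hg)⟩

theorem exists_injective_two_mul_backDegree_le [Finite V] (A : V → V → Prop) :
    ∃ f : V → ℤ, Injective f ∧
      ∀ v, 2 * backDegree A f v ≤ {u | A u v}.ncard + {u | A v u}.ncard := by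
  classical
  obtain ⟨f, hf, hmin⟩ := exists_injective_forall_ncard_backArcs_le A
  refine ⟨f, hf, fun v => ?_⟩
  obtain ⟨lo, hlo⟩ : ∃ c, ∀ u, c < f u := by
    obtain ⟨b, hb⟩ := (finite_range f).bddBelow
    exact ⟨b - 1, fun u => (sub_one_lt b).trans_le (hb ⟨u, rfl⟩)⟩
  obtain ⟨hi, hhi⟩ : ∃ c, ∀ u, f u < c := by
    obtain ⟨b, hb⟩ := (finite_range f).bddAbove
    exact ⟨b + 1, fun u => (hb ⟨u, rfl⟩).trans_lt (lt_add_one b)⟩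
  have hin : backDegree A f v ≤ {u | A u v}.ncard := by
    refine (backDegree_le_of_ncard_backArcs_le A (fun u hu => update_of_ne hu lo f)
      (hmin _ (hf.update_of_forall_ne fun u _ => (hlo u).ne'))).trans ?_
    exact backDegree_le_ncard_in A fun u hu => by simpa [hu] using hlo u
  have hout : backDegree A f v ≤ {u | A v u}.ncard := by
    refine (backDegree_le_of_ncard_backArcs_le A (fun u hu => update_of_ne hu hi f)
      (hmin _ (hf.update_of_forall_ne fun u _ => (hhi u).ne))).trans ?_
    exact backDegree_le_ncard_out A fun u hu => by simpa [hu] using hhi u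
  omega

/-- There is a total order halving all degrees in the backedge graph. -/
theorem stmt_2 [Fintype V] (A : V → V → Prop) :
    ∃ L : LinearOrder V, ∀ v : V,
      ((backedge A L).neighborSet v).ncard ≤
        (Set.ncard {u | A u v} + Set.ncard {u | A v u}) / 2 := by
  obtain ⟨f, hf, hdeg⟩ := exists_injective_two_mul_backDegree_le A
  refine ⟨LinearOrder.lift' f hf, fun v => ?_⟩
  rw [Nat.le_div_iff_mul_le two_pos, mul_comm]
  calc 2 * ((backedge A (LinearOrder.lift' f hf)).neighborSet v).ncard
      ≤ 2 * backDegree A f v := by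
        rw [neighborSet_backedge_lift', backDegree, add_comm]
        exact Nat.mul_le_mul_left 2 (ncard_union_le _ _)
    _ ≤ _ := hdeg v
end

section
/- Let D be an oriented graph (a digraph with no pair of opposite arcs and no loops) whose underlying graph is triangle-free. Suppose V(D) is partitioned into three sets X, Y, Z such that: (i) D[X] is acyclic, (ii) Y is an independent set, (iii) there is no arc between X and Z in either direction, and (iv) there is a 2-dicolouring c of D[Z] such that the colour class c⁻¹(1) is empty, or a single vertex, or two adjacent vertices. Then D is 2-dicolourable. -/
open Set

variable {V : Type*}

lemma cyc_all {n : ℕ} (p : Fin (n+1) → Prop) (h0 : p 0) (h : ∀ i, p i → p (i+1)) :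
    ∀ i, p i := by
  intro ⟨m, hm⟩
  induction m with
  | zero => exact h0
  | succ k ih =>
    have hk : k < n + 1 := Nat.lt_of_succ_lt hm
    have hstep := h ⟨k, hk⟩ (ih hk)
    have he : (⟨k, hk⟩ : Fin (n+1)) + 1 = ⟨k+1, hm⟩ := by
      apply Fin.ext
      simp [Fin.add_def, Nat.mod_eq_of_lt hm, Nat.mod_eq_of_lt (show 1 < n+1 by omega)]
    rwa [he] at hstep

/-- The cut lemma: a triangle-free oriented graph partitioned into an acyclic set `X`,
an independent set `Y`, and a set `Z` not adjacent to `X` admitting a suitable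
2-dicolouring, is 2-dicolourable. -/
theorem stmt_6 [Fintype V] (A : V → V → Prop) (hor : Oriented A) (htf : TriangleFreeDi A)
    (X Y Z : Set V) (hcover : X ∪ Y ∪ Z = Set.univ)
    (hXY : Disjoint X Y) (hXZ : Disjoint X Z) (hYZ : Disjoint Y Z)
    (h1 : AcyclicSet A X)
    (h2 : ∀ u ∈ Y, ∀ v ∈ Y, ¬ A u v)
    (h3 : ∀ x ∈ X, ∀ z ∈ Z, ¬ A x z ∧ ¬ A z x)
    (h4 : ∃ c : V → Fin 2, (∀ i, AcyclicSet A (Z ∩ {v | c v = i})) ∧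
      (Z ∩ {v | c v = 0} = ∅ ∨ (∃ v, Z ∩ {v | c v = 0} = {v}) ∨
        (∃ u v, (A u v ∨ A v u) ∧ Z ∩ {v | c v = 0} = {u, v}))) :
    Dicolourable A 2 := by
  classical
  obtain ⟨c, hc, hcase⟩ := h4
  set Z0 : Set V := Z ∩ {v | c v = 0} with hZ0def
  set Z1 : Set V := Z ∩ {v | c v = 1} with hZ1def
  have hZ0Z : Z0 ⊆ Z := inter_subset_left
  have hZ1Z : Z1 ⊆ Z := inter_subset_left
  refine ⟨fun v => if v ∈ Y ∪ Z0 then 1 else 0, ?_⟩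
  have hset1 : {v | (if v ∈ Y ∪ Z0 then (1 : Fin 2) else 0) = 1} = Y ∪ Z0 := by
    ext v
    simp only [mem_setOf_eq]
    by_cases h : v ∈ Y ∪ Z0
    · rw [if_pos h]; exact iff_of_true rfl h
    · rw [if_neg h]; exact iff_of_false (by decide) h
  have hset0 : {v | (if v ∈ Y ∪ Z0 then (1 : Fin 2) else 0) = 0} = X ∪ Z1 := by
    ext v
    simp only [mem_setOf_eq]
    by_cases h : v ∈ Y ∪ Z0
    · rw [if_pos h]
      constructor
      · intro h'; exact absurd h' (by decide)
      · intro h'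
        rcases h with hY | hZ0
        · rcases h' with hX | hZ1
          · exact absurd hY (disjoint_left.mp hXY hX)
          · exact absurd hY (disjoint_right.mp hYZ (hZ1Z hZ1))
        · rcases h' with hX | hZ1
          · exact absurd (hZ0Z hZ0) (disjoint_left.mp hXZ hX)
          · have := hZ0.2; have := hZ1.2; simp_all
    · rw [if_neg h]
      constructor
      · intro _
        have hv : v ∈ X ∪ Y ∪ Z := hcover.symm ▸ mem_univ v
        rcases hv with (hX | hY) | hZ
        · exact Or.inl hX
        · exact absurd (Or.inl hY) h
        · have h01 : c v = 0 ∨ c v = 1 := by omega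
          rcases h01 with h0 | h1'
          · exact absurd (Or.inr ⟨hZ, h0⟩) h
          · exact Or.inr ⟨hZ, h1'⟩
      · intro _; rfl
  intro col
  have hcol : col = 0 ∨ col = 1 := by omega
  rcases hcol with rfl | rfl
  · -- colour class 0 = X ∪ Z1
    rw [show {v | (if v ∈ Y ∪ Z0 then (1 : Fin 2) else 0) = 0} = X ∪ Z1 from hset0]
    rintro ⟨n, f, hinj, hmem, harc⟩
    have hstepX : ∀ i, f i ∈ X → f (i+1) ∈ X := by
      intro i hX
      rcases hmem (i+1) with hX' | hZ1
      · exact hX'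
      · exact absurd (harc i) (h3 _ hX _ (hZ1Z hZ1)).1
    have hstepZ : ∀ i, f i ∈ Z1 → f (i+1) ∈ Z1 := by
      intro i hZ
      rcases hmem (i+1) with hX' | hZ1
      · exact absurd (harc i) (h3 _ hX' _ (hZ1Z hZ)).2
      · exact hZ1
    rcases hmem 0 with hX0 | hZ10
    · exact h1 ⟨n, f, hinj, cyc_all _ hX0 hstepX, harc⟩
    · exact hc 1 ⟨n, f, hinj, cyc_all _ hZ10 hstepZ, harc⟩
  · -- colour class 1 = Y ∪ Z0
    rw [show {v | (if v ∈ Y ∪ Z0 then (1 : Fin 2) else 0) = 1} = Y ∪ Z0 from hset1]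
    rintro ⟨n, f, hinj, hmem, harc⟩
    have hYstep : ∀ i, f i ∈ Y → f (i+1) ∈ Z0 := by
      intro i hY
      rcases hmem (i+1) with hY' | hZ0
      · exact absurd (harc i) (h2 _ hY _ hY')
      · exact hZ0
    -- counting: number of vertices of the cycle in Z0
    set SY : Finset (Fin (n+1)) := Finset.univ.filter (fun i => f i ∈ Y) with hSY
    set SZ : Finset (Fin (n+1)) := Finset.univ.filter (fun i => f i ∈ Z0) with hSZ
    have hsub : (Finset.univ : Finset (Fin (n+1))) ⊆ SY ∪ SZ := by
      intro i _
      rcases hmem i with hY | hZ0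
      · exact Finset.mem_union_left _ (Finset.mem_filter.mpr ⟨Finset.mem_univ _, hY⟩)
      · exact Finset.mem_union_right _ (Finset.mem_filter.mpr ⟨Finset.mem_univ _, hZ0⟩)
    have hcardYZ : SY.card ≤ SZ.card := by
      apply Finset.card_le_card_of_injOn (fun i => i + 1)
      · intro i hi
        exact Finset.mem_filter.mpr ⟨Finset.mem_univ _,
          hYstep i (Finset.mem_filter.mp hi).2⟩
      · intro a _ b _ hab
        exact add_left_injective 1 hab
    have htot : n + 1 ≤ SY.card + SZ.card := by
      calc n + 1 = (Finset.univ : Finset (Fin (n+1))).card := by simp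
        _ ≤ (SY ∪ SZ).card := Finset.card_le_card hsub
        _ ≤ SY.card + SZ.card := Finset.card_union_le _ _
    rcases hcase with hemp | ⟨w, hw⟩ | ⟨u, v, huv, huvZ⟩
    · -- Z0 empty
      have : SZ = ∅ := by
        apply Finset.eq_empty_of_forall_notMem
        intro i hi
        have := (Finset.mem_filter.mp hi).2
        rw [hemp] at this
        simp at this
      have hz : SZ.card = 0 := by rw [this]; rfl
      omega
    · -- Z0 singleton
      have hZcard : SZ.card ≤ ({w} : Finset V).card := by
        apply Finset.card_le_card_of_injOn f
        · intro i hi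
          have := (Finset.mem_filter.mp hi).2
          rw [hw] at this
          simpa using this
        · exact fun a _ b _ h => hinj h
      simp at hZcard
      have hn : n ≤ 1 := by omega
      interval_cases n
      · have e : (0 : Fin 1) + 1 = 0 := by decide
        have := harc 0
        rw [e] at this
        exact hor _ _ this this
      · have e : (1 : Fin 2) + 1 = 0 := by decide
        have h10 := harc 1
        rw [e] at h10
        exact hor _ _ (harc 0) h10
    · -- Z0 = {u, v}, u and v adjacent
      have hZcard : SZ.card ≤ ({u, v} : Finset V).card := by
        apply Finset.card_le_card_of_injOn f
        · intro i hi
          have := (Finset.mem_filter.mp hi).2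
          rw [huvZ] at this
          simpa using this
        · exact fun a _ b _ h => hinj h
      have h2' : ({u, v} : Finset V).card ≤ 2 := Finset.card_insert_le _ _ |>.trans (by simp)
      have hn : n ≤ 3 := by omega
      have two_only : ∀ a b c' : Fin (n+1), a ≠ b → a ≠ c' → b ≠ c' →
          f a ∈ Z0 → f b ∈ Z0 → f c' ∈ Z0 → False := by
        intro a b c' hab hac hbc ha hb hc'
        rw [huvZ] at ha hb hc'
        rcases ha with ha | ha <;> rcases hb with hb | hb <;> rcases hc' with hc' | hc' <;>
          first
            | exact hab (hinj (ha.trans hb.symm))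
            | exact hac (hinj (ha.trans hc'.symm))
            | exact hbc (hinj (hb.trans hc'.symm))
      have adjZ : ∀ a b : Fin (n+1), a ≠ b → f a ∈ Z0 → f b ∈ Z0 →
          (A (f a) (f b) ∨ A (f b) (f a)) := by
        intro a b hab ha hb
        rw [huvZ] at ha hb
        rcases ha with ha | ha <;> rcases hb with hb | hb
        · exact absurd (hinj (ha.trans hb.symm)) hab
        · rw [ha, hb]; exact huv
        · rw [ha, hb]; exact huv.symm
        · exact absurd (hinj (ha.trans hb.symm)) hab
      interval_cases n
      · have e : (0 : Fin 1) + 1 = 0 := by decide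
        have := harc 0
        rw [e] at this
        exact hor _ _ this this
      · have e : (1 : Fin 2) + 1 = 0 := by decide
        have h10 := harc 1
        rw [e] at h10
        exact hor _ _ (harc 0) h10
      · have e0 : (0 : Fin 3) + 1 = 1 := by decide
        have e1 : (1 : Fin 3) + 1 = 2 := by decide
        have e2 : (2 : Fin 3) + 1 = 0 := by decide
        have a0 := harc 0; rw [e0] at a0
        have a1 := harc 1; rw [e1] at a1
        have a2 := harc 2; rw [e2] at a2
        exact htf (f 0) (f 1) (f 2) (Or.inl a0) (Or.inl a1) (Or.inr a2)
      · have e0 : (0 : Fin 4) + 1 = 1 := by decide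
        have e1 : (1 : Fin 4) + 1 = 2 := by decide
        have e2 : (2 : Fin 4) + 1 = 3 := by decide
        have e3 : (3 : Fin 4) + 1 = 0 := by decide
        have a0 := harc 0; rw [e0] at a0
        have a1 := harc 1; rw [e1] at a1
        have a2 := harc 2; rw [e2] at a2
        have a3 := harc 3; rw [e3] at a3
        have hY0 : ∀ i : Fin 4, f i ∈ Y → f (i+1) ∈ Z0 := hYstep
        rcases hmem 0 with hY00 | hZ00
        · -- f 0 ∈ Y, so f 1 ∈ Z0
          have hZ01 : f 1 ∈ Z0 := by have := hY0 0 hY00; rwa [e0] at this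
          rcases hmem 2 with hY2 | hZ2
          · have hZ03 : f 3 ∈ Z0 := by have := hY0 2 hY2; rwa [e2] at this
            exact htf (f 1) (f 0) (f 3) (Or.inr a0) (Or.inr a3)
              (adjZ 1 3 (by decide) hZ01 hZ03)
          · rcases hmem 3 with hY3 | hZ3
            · exact h2 _ hY3 _ hY00 a3
            · exact two_only 1 2 3 (by decide) (by decide) (by decide) hZ01 hZ2 hZ3
        · -- f 0 ∈ Z0
          rcases hmem 1 with hY1 | hZ1'
          · have hZ02 : f 2 ∈ Z0 := by have := hY0 1 hY1; rwa [e1] at this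
            exact htf (f 0) (f 1) (f 2) (Or.inl a0) (Or.inl a1)
              (adjZ 0 2 (by decide) hZ00 hZ02)
          · rcases hmem 2 with hY2 | hZ2
            · have hZ03 : f 3 ∈ Z0 := by have := hY0 2 hY2; rwa [e2] at this
              exact two_only 0 1 3 (by decide) (by decide) (by decide) hZ00 hZ1' hZ03
            · exact two_only 0 1 2 (by decide) (by decide) (by decide) hZ00 hZ1' hZ2
end

section
/- Let G be a graph of order n and set d = 2·log₂(n) + 1. Then there exists an orientation G⃗ of G such that every set X ⊆ V(G) inducing an acyclic subdigraph of G⃗ is d-sparse in G, i.e., the number of edges of G[X] is at most d·|X|/2. -/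
open Set

variable {V : Type*}

section Sparse7Aux

variable {V : Type*}

lemma sparse7_walk_cycle (A : V → V → Prop) (S : Set V) :
    ∀ k : ℕ, 1 ≤ k → ∀ f : ℕ → V, (∀ i < k, A (f i) (f (i+1))) → (∀ i ≤ k, f i ∈ S) →
    f k = f 0 → DiCycleIn A S := by
  intro k
  induction k using Nat.strong_induction_on with
  | _ k IH =>
    intro hk f harc hmem hcl
    by_cases hinj : Set.InjOn f (Set.Iio k)
    · obtain ⟨k', rfl⟩ : ∃ k', k = k' + 1 := ⟨k - 1, (Nat.succ_pred_eq_of_pos hk).symm⟩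
      refine ⟨k', fun i => f i.val, ?_, fun i => hmem _ (le_of_lt i.isLt), ?_⟩
      · intro i j hij
        exact Fin.ext (hinj (Set.mem_Iio.2 i.isLt) (Set.mem_Iio.2 j.isLt) hij)
      · intro i
        rcases eq_or_lt_of_le (Nat.lt_succ_iff.mp i.isLt) with h | h
        · have h1 : (i + 1 : Fin (k'+1)) = ⟨0, Nat.succ_pos _⟩ := by
            apply Fin.ext
            simp [Fin.add_def, h]
          rw [h1]
          have h2 := harc k' (by omega)
          rw [hcl] at h2
          show A (f i.val) (f 0)
          rw [h]
          exact h2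
        · have : ((i + 1 : Fin (k'+1)) : ℕ) = i.val + 1 := by
            simp [Fin.add_def, Nat.mod_eq_of_lt (by omega : i.val + 1 < k' + 1)]
          have h2 := harc i.val (by omega)
          show A (f i.val) (f ((i+1 : Fin (k'+1)).val))
          rw [this]
          exact h2
    · rw [Set.InjOn] at hinj
      push_neg at hinj
      obtain ⟨a, ha, b, hb, hfab, hab⟩ := hinj
      simp only [Set.mem_Iio] at ha hb
      have key : ∀ a b : ℕ, a < b → b < k → f a = f b → DiCycleIn A S := by
        intro a b h hbk hfab
        refine IH (b - a) (by omega) (by omega) (fun m => f (a + m)) ?_ ?_ ?_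
        · intro i hi
          have h3 := harc (a + i) (by omega)
          show A (f (a + i)) (f (a + (i + 1)))
          rw [← Nat.add_assoc]
          exact h3
        · intro i hi; exact hmem _ (by omega)
        · simp only [Nat.add_sub_cancel' (le_of_lt h)]
          exact hfab.symm
      rcases lt_or_gt_of_ne hab with h | h
      · exact key a b h hb hfab
      · exact key b a h ha hfab.symm

lemma sparse7_acyclic_mono {A : V → V → Prop} {S T : Set V} (hST : S ⊆ T)
    (h : AcyclicSet A T) : AcyclicSet A S := by
  intro ⟨n, f, hi, hm, ha⟩
  exact h ⟨n, f, hi, fun i => hST (hm i), ha⟩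

lemma sparse7_sink (A : V → V → Prop) (X : Finset V) (hA : AcyclicSet A ↑X)
    (hne : X.Nonempty) : ∃ v ∈ X, ∀ u ∈ X, ¬ A v u := by
  classical
  by_contra h
  push_neg at h
  choose g hg1 hg2 using h
  obtain ⟨x₀, hx₀⟩ := hne
  -- build an infinite walk
  set f : ℕ → V := fun m => Nat.rec x₀ (fun _ v => if hv : v ∈ X then g v hv else v) m with hf
  have hmem : ∀ m, f m ∈ X := by
    intro m; induction m with
    | zero => exact hx₀
    | succ m ih => simp only [hf]; simp only [hf] at ih; rw [dif_pos ih]; exact hg1 _ ih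
  have harc : ∀ m, A (f m) (f (m+1)) := by
    intro m
    have hm := hmem m
    show A (f m) _
    have : f (m+1) = g (f m) hm := by simp only [hf]; rw [dif_pos]
    rw [this]
    exact hg2 _ hm
  -- pigeonhole
  have : ∃ a ∈ Finset.range (X.card + 1), ∃ b ∈ Finset.range (X.card + 1), a ≠ b ∧ f a = f b := by
    apply Finset.exists_ne_map_eq_of_card_lt_of_maps_to (t := X)
    · simp
    · intro a _; exact hmem a
  obtain ⟨a, -, b, -, hab, hfab⟩ := this
  wlog h' : a < b generalizing a b
  · exact this b a hab.symm hfab.symm (by omega)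
  exact hA (sparse7_walk_cycle A ↑X (b - a) (by omega) (fun m => f (a + m))
    (fun i _ => harc _) (fun i _ => hmem _)
    (by simp only [Nat.add_sub_cancel' (le_of_lt h')]; exact hfab.symm))

lemma sparse7_topo (A : V → V → Prop) (X : Finset V) (hA : AcyclicSet A ↑X) :
    ∃ ℓ : V → ℕ, Set.InjOn ℓ ↑X ∧ (∀ u ∈ X, ℓ u < X.card) ∧
      (∀ u ∈ X, ∀ w ∈ X, A u w → ℓ u < ℓ w) := by
  classical
  induction X using Finset.strongInduction with
  | _ X IH =>
    rcases X.eq_empty_or_nonempty with rfl | hne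
    · exact ⟨fun _ => 0, by simp [Set.InjOn], by simp, by simp⟩
    · obtain ⟨v, hv, hsink⟩ := sparse7_sink A X hA hne
      have hsub : X.erase v ⊂ X := Finset.erase_ssubset hv
      obtain ⟨ℓ, hinj, hbd, hmono⟩ := IH _ hsub
        (sparse7_acyclic_mono (by exact_mod_cast Finset.coe_subset.2 hsub.subset) hA)
      have hcard : (X.erase v).card = X.card - 1 := Finset.card_erase_of_mem hv
      have hc1 : 1 ≤ X.card := Finset.card_pos.2 hne
      refine ⟨Function.update ℓ v (X.card - 1), ?_, ?_, ?_⟩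
      · intro a ha b hb hab
        by_cases hav : a = v <;> by_cases hbv : b = v
        · rw [hav, hbv]
        · exfalso
          rw [hav, Function.update_self, Function.update_of_ne hbv] at hab
          have := hbd b (Finset.mem_erase.2 ⟨hbv, hb⟩)
          omega
        · exfalso
          rw [hbv, Function.update_self, Function.update_of_ne hav] at hab
          have := hbd a (Finset.mem_erase.2 ⟨hav, ha⟩)
          omega
        · rw [Function.update_of_ne hav, Function.update_of_ne hbv] at hab
          exact hinj (Finset.mem_coe.2 (Finset.mem_erase.2 ⟨hav, ha⟩))
            (Finset.mem_coe.2 (Finset.mem_erase.2 ⟨hbv, hb⟩)) hab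
      · intro u hu
        by_cases huv : u = v
        · rw [huv, Function.update_self]; omega
        · rw [Function.update_of_ne huv]
          have := hbd u (Finset.mem_erase.2 ⟨huv, hu⟩)
          omega
      · intro u hu w hw harc
        by_cases huv : u = v
        · exact absurd harc (huv ▸ hsink w hw)
        · rw [Function.update_of_ne huv]
          by_cases hwv : w = v
          · rw [hwv, Function.update_self]
            have := hbd u (Finset.mem_erase.2 ⟨huv, hu⟩)
            omega
          · rw [Function.update_of_ne hwv]
            exact hmono u (Finset.mem_erase.2 ⟨huv, hu⟩) w (Finset.mem_erase.2 ⟨hwv, hw⟩) harc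


lemma sparse7_mk_out (e : Sym2 V) : s(e.out.1, e.out.2) = e := by
  exact Quot.out_eq e

lemma sparse7_within_card [DecidableEq V] [Fintype V] (G : SimpleGraph V)
    [DecidableRel G.Adj] (X : Finset V) :
    2 * (G.edgeFinset.filter (fun e => ∀ v ∈ e, v ∈ X)).card ≤ X.card * X.card - X.card := by
  rw [← Finset.offDiag_card]
  have := Finset.card_le_card_of_injOn
    (f := fun p : Sym2 V × Bool => if p.2 then (p.1.out.1, p.1.out.2) else (p.1.out.2, p.1.out.1))
    (s := (G.edgeFinset.filter (fun e => ∀ v ∈ e, v ∈ X)) ×ˢ (Finset.univ : Finset Bool))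
    (t := X.offDiag) ?_ ?_
  · rw [Finset.card_product, Finset.card_univ, Fintype.card_bool] at this
    omega
  · rintro ⟨e, b⟩ hmem
    simp only [Finset.mem_coe, Finset.mem_product, Finset.mem_filter] at hmem
    obtain ⟨⟨heE, hXm⟩, -⟩ := hmem
    have h1 : e.out.1 ∈ X := hXm _ (Sym2.out_fst_mem e)
    have h2 : e.out.2 ∈ X := hXm _ (Sym2.out_snd_mem e)
    have hne : e.out.1 ≠ e.out.2 := by
      intro h
      have hd := G.not_isDiag_of_mem_edgeSet (SimpleGraph.mem_edgeFinset.1 heE)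
      rw [← sparse7_mk_out e] at hd
      exact hd (Sym2.mk_isDiag_iff.2 h)
    rcases b with _ | _ <;> simp [Finset.mem_offDiag, h1, h2, hne, hne.symm]
  · rintro ⟨e, b⟩ he ⟨e', b'⟩ he' heq
    simp only [Finset.mem_coe, Finset.mem_product, Finset.mem_filter] at he he'
    have hd : e.out.1 ≠ e.out.2 := by
      intro h
      have hd := G.not_isDiag_of_mem_edgeSet (SimpleGraph.mem_edgeFinset.1 he.1.1)
      rw [← sparse7_mk_out e] at hd
      exact hd (Sym2.mk_isDiag_iff.2 h)
    have hee' : e = e' := by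
      have : s(((if b then (e.out.1, e.out.2) else (e.out.2, e.out.1)) : V × V).1,
          ((if b then (e.out.1, e.out.2) else (e.out.2, e.out.1)) : V × V).2) = e := by
        rcases b with _ | _ <;> simp [sparse7_mk_out, Sym2.eq_swap]
      have that : s(((if b' then (e'.out.1, e'.out.2) else (e'.out.2, e'.out.1)) : V × V).1,
          ((if b' then (e'.out.1, e'.out.2) else (e'.out.2, e'.out.1)) : V × V).2) = e' := by
        rcases b' with _ | _ <;> simp [sparse7_mk_out, Sym2.eq_swap]
      rw [← this, ← that]
      simp only at heq
      rw [heq]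
    subst hee'
    have hbb' : b = b' := by
      rcases b with _ | _ <;> rcases b' with _ | _
      · rfl
      · simp only [if_true, if_false] at heq
        exact absurd (congrArg Prod.fst heq) hd.symm
      · simp only [if_true, if_false] at heq
        exact absurd (congrArg Prod.fst heq) hd
      · rfl
    rw [hbb']


variable [Fintype V] [DecidableEq V] [LinearOrder V]

def sparse7_em (G : SimpleGraph V) [DecidableRel G.Adj] {u v : V} (h : G.Adj u v) :
    s(u, v) ∈ G.edgeFinset := SimpleGraph.mem_edgeFinset.2 h

def sparse7_A (G : SimpleGraph V) [DecidableRel G.Adj]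
    (c : ↥G.edgeFinset → Bool) (u v : V) : Prop :=
  ∃ h : G.Adj u v, (c ⟨s(u, v), sparse7_em G h⟩ = true ↔ u ≤ v)

lemma sparse7_swap_elt (G : SimpleGraph V) [DecidableRel G.Adj] {u v : V}
    (h : G.Adj u v) : (⟨s(v, u), sparse7_em G h.symm⟩ : ↥G.edgeFinset)
      = ⟨s(u, v), sparse7_em G h⟩ := Subtype.ext Sym2.eq_swap

lemma sparse7_orient (G : SimpleGraph V) [DecidableRel G.Adj] (c : ↥G.edgeFinset → Bool) :
    IsOrientation G (sparse7_A G c) := by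
  constructor
  · intro u v
    constructor
    · intro h
      have hne : u ≠ v := h.ne
      have htot := le_total u v
      have hanti : ¬ (u ≤ v ∧ v ≤ u) := fun ⟨h1, h2⟩ => hne (le_antisymm h1 h2)
      by_cases hc : c ⟨s(u, v), sparse7_em G h⟩ = true ↔ u ≤ v
      · exact Or.inl ⟨h, hc⟩
      · refine Or.inr ⟨h.symm, ?_⟩
        rw [sparse7_swap_elt G h]
        tauto
    · rintro (⟨h, -⟩ | ⟨h, -⟩)
      · exact h
      · exact h.symm
  · rintro u v ⟨h, hc⟩ ⟨h', hc'⟩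
    rw [sparse7_swap_elt G h'.symm] at hc'
    have hne : u ≠ v := h.ne
    have htot := le_total u v
    have hanti : ¬ (u ≤ v ∧ v ≤ u) := fun ⟨h1, h2⟩ => hne (le_antisymm h1 h2)
    tauto


open Classical in
lemma sparse7_count (G : SimpleGraph V) [DecidableRel G.Adj] (X : Finset V) :
    (Finset.univ.filter (fun c : ↥G.edgeFinset → Bool => AcyclicSet (sparse7_A G c) ↑X)).card
      ≤ X.card.factorial *
        2 ^ (G.edgeFinset.card - (G.edgeFinset.filter (fun e => ∀ v ∈ e, v ∈ X)).card) := by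
  classical
  set W : Finset (Sym2 V) := G.edgeFinset.filter (fun e => ∀ v ∈ e, v ∈ X) with hW
  set P : (↥G.edgeFinset → Bool) → Prop := fun c => AcyclicSet (sparse7_A G c) ↑X with hP
  have hcard : (Finset.univ.filter P).card = Fintype.card {c // P c} :=
    (Fintype.card_subtype P).symm
  rw [hcard]
  have htarget : Fintype.card ((↥X ↪ Fin X.card) × (↥(G.edgeFinset \ W) → Bool))
      = X.card.factorial * 2 ^ (G.edgeFinset.card - W.card) := by
    rw [Fintype.card_prod, Fintype.card_embedding_eq, Fintype.card_coe, Fintype.card_fin,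
      Nat.descFactorial_self, Fintype.card_fun, Fintype.card_bool, Fintype.card_coe,
      Finset.card_sdiff_of_subset (Finset.filter_subset _ _)]
  rw [← htarget]
  have topo : ∀ c : {c // P c}, ∃ ℓ : V → ℕ, Set.InjOn ℓ ↑X ∧ (∀ u ∈ X, ℓ u < X.card) ∧
      (∀ u ∈ X, ∀ w ∈ X, sparse7_A G c.val u w → ℓ u < ℓ w) :=
    fun c => sparse7_topo _ X c.2
  choose ℓ h1 h2 h3 using topo
  apply Fintype.card_le_of_injective (fun c =>
    (⟨fun u => ⟨ℓ c u.val, h2 c u.val u.2⟩, fun a b hab =>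
        Subtype.ext (h1 c a.2 b.2 (congrArg Fin.val hab))⟩,
     fun e => c.val ⟨e.val, (Finset.mem_sdiff.1 e.2).1⟩))
  intro c₁ c₂ hΦ
  have hemb : ∀ u : V, u ∈ X → ℓ c₁ u = ℓ c₂ u := by
    intro u hu
    have := congrArg Prod.fst hΦ
    have := congrArg (fun g : ↥X ↪ Fin X.card => (g ⟨u, hu⟩ : Fin X.card).val) this
    exact this
  have hsnd := congrArg Prod.snd hΦ
  apply Subtype.ext
  funext e
  by_cases hw : e.val ∈ W
  · -- edge inside X
    obtain ⟨ev, he⟩ := e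
    induction ev using Sym2.ind with
    | _ u v =>
      have hadj : G.Adj u v := by
        rw [SimpleGraph.mem_edgeFinset, SimpleGraph.mem_edgeSet] at he; exact he
      have hu : u ∈ X := by
        simp only [hW, Finset.mem_filter] at hw
        exact hw.2 u (Sym2.mem_mk_left u v)
      have hv : v ∈ X := by
        simp only [hW, Finset.mem_filter] at hw
        exact hw.2 v (Sym2.mem_mk_right u v)
      have key : ∀ i : {c // P c}, sparse7_A G i.val u v ∨ sparse7_A G i.val v u :=
        fun i => ((sparse7_orient G i.val).1 u v).1 hadj
      have asym : ∀ i : {c // P c}, sparse7_A G i.val u v → ¬ sparse7_A G i.val v u :=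
        fun i => (sparse7_orient G i.val).2 u v
      have same : sparse7_A G c₁.val u v ↔ sparse7_A G c₂.val u v := by
        constructor
        · intro h12
          rcases key c₂ with h | h
          · exact h
          · exfalso
            have a1 := h3 c₁ u hu v hv h12
            have a2 := h3 c₂ v hv u hu h
            rw [hemb u hu, hemb v hv] at a1
            omega
        · intro h12
          rcases key c₁ with h | h
          · exact h
          · exfalso
            have a1 := h3 c₂ u hu v hv h12
            have a2 := h3 c₁ v hv u hu h
            rw [hemb u hu, hemb v hv] at a2
            omega
      have helt : (⟨s(u, v), he⟩ : ↥G.edgeFinset) = ⟨s(u, v), sparse7_em G hadj⟩ := rfl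
      rw [helt]
      rcases key c₁ with h | h
      · obtain ⟨h', hiff₁⟩ := h
        obtain ⟨h'', hiff₂⟩ := same.1 ⟨h', hiff₁⟩
        have e1 : c₁.val ⟨s(u, v), sparse7_em G hadj⟩ = true ↔ u ≤ v := hiff₁
        have e2 : c₂.val ⟨s(u, v), sparse7_em G hadj⟩ = true ↔ u ≤ v := hiff₂
        exact Bool.coe_iff_coe.1 (e1.trans e2.symm)
      · obtain ⟨h', hiff₁⟩ := h
        have h2A : sparse7_A G c₂.val v u := by
          rcases key c₂ with hx | hx
          · exact absurd (same.2 hx) (fun hh => asym c₁ hh ⟨h', hiff₁⟩)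
          · exact hx
        obtain ⟨h'', hiff₂⟩ := h2A
        rw [sparse7_swap_elt G hadj] at hiff₁ hiff₂
        have e1 : c₁.val ⟨s(u, v), sparse7_em G hadj⟩ = true ↔ v ≤ u := hiff₁
        have e2 : c₂.val ⟨s(u, v), sparse7_em G hadj⟩ = true ↔ v ≤ u := hiff₂
        exact Bool.coe_iff_coe.1 (e1.trans e2.symm)
  · have := congrArg (fun g : ↥(G.edgeFinset \ W) → Bool =>
      g ⟨e.val, Finset.mem_sdiff.2 ⟨e.2, hw⟩⟩) hsnd
    simpa using this


open Classical Finset in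
lemma sparse7_main (G : SimpleGraph V) [DecidableRel G.Adj] (n : ℕ) (hn : Fintype.card V = n)
    (hn2 : 2 ≤ n) (d : ℝ) (hd : d = 2 * Real.logb 2 n + 1) :
    ∃ c : ↥G.edgeFinset → Bool, ∀ X : Finset V, AcyclicSet (sparse7_A G c) ↑X →
      ((G.edgeFinset.filter (fun e => ∀ v ∈ e, v ∈ X)).card : ℝ) ≤ d * X.card / 2 := by
  classical
  set E : ℕ := G.edgeFinset.card with hE
  set m : Finset V → ℕ := fun X => (G.edgeFinset.filter (fun e => ∀ v ∈ e, v ∈ X)).card with hm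
  by_contra hcon
  push_neg at hcon
  -- every colouring has a bad acyclic set
  set Bad : Finset (Finset V) :=
    Finset.univ.filter (fun X => d * X.card / 2 < (m X : ℝ)) with hBad
  set N : Finset V → ℕ :=
    fun X => (Finset.univ.filter
      (fun c : ↥G.edgeFinset → Bool => AcyclicSet (sparse7_A G c) ↑X)).card with hN
  -- Step A : 2^E ≤ ∑_{X ∈ Bad} N X
  have stepA : (2 : ℕ) ^ E ≤ ∑ X ∈ Bad, N X := by
    have h1 : (2 : ℕ) ^ E = Fintype.card (↥G.edgeFinset → Bool) := by
      rw [Fintype.card_fun, Fintype.card_bool, Fintype.card_coe]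
    have h2 : ∀ c : ↥G.edgeFinset → Bool,
        1 ≤ (Bad.filter (fun X : Finset V => AcyclicSet (sparse7_A G c) ↑X)).card := by
      intro c
      obtain ⟨X, hX1, hX2⟩ := hcon c
      refine Finset.card_pos.2 ⟨X, ?_⟩
      rw [Finset.mem_filter, hBad, Finset.mem_filter]
      exact ⟨⟨Finset.mem_univ X, hX2⟩, hX1⟩
    calc (2:ℕ) ^ E = Fintype.card (↥G.edgeFinset → Bool) := h1
      _ = ∑ _c : ↥G.edgeFinset → Bool, 1 := Finset.card_eq_sum_ones _
      _ ≤ ∑ c : ↥G.edgeFinset → Bool,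
            (Bad.filter (fun X : Finset V => AcyclicSet (sparse7_A G c) ↑X)).card :=
          Finset.sum_le_sum (fun c _ => h2 c)
      _ = ∑ c : ↥G.edgeFinset → Bool, ∑ X ∈ Bad,
            (if AcyclicSet (sparse7_A G c) ↑X then 1 else 0) := by
          refine Finset.sum_congr rfl (fun c _ => ?_)
          rw [Finset.card_filter]
      _ = ∑ X ∈ Bad, ∑ c : ↥G.edgeFinset → Bool,
            (if AcyclicSet (sparse7_A G c) ↑X then 1 else 0) := Finset.sum_comm
      _ = ∑ X ∈ Bad, N X := by
          refine Finset.sum_congr rfl (fun X _ => ?_)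
          simp only [hN]
          rw [Finset.card_filter]
  -- basic facts
  have hd3 : (3 : ℝ) ≤ d := by
    rw [hd]
    have h1 : (1:ℝ) ≤ Real.logb 2 n := by
      have := Real.logb_le_logb_of_le (b := 2) (x := 2) (y := (n:ℝ)) (by norm_num)
        (by norm_num) (by exact_mod_cast hn2)
      rwa [Real.logb_self_eq_one (by norm_num)] at this
    linarith
  have hnpos : (0:ℝ) < (n:ℝ) := by
    have : 0 < n := by omega
    exact_mod_cast this
  have hbadm : ∀ X ∈ Bad, d * X.card / 2 < (m X : ℝ) := by
    intro X hX
    exact (Finset.mem_filter.1 hX).2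
  -- every bad set has at least 5 elements
  have hcard5 : ∀ X ∈ Bad, 5 ≤ X.card := by
    intro X hX
    have hX2 := hbadm X hX
    have hm1 : 1 ≤ m X := by
      by_contra h
      push_neg at h
      have hmx : m X = 0 := by omega
      rw [hmx] at hX2
      have h0 : (0:ℝ) ≤ d * X.card / 2 :=
        div_nonneg (mul_nonneg (by linarith) (Nat.cast_nonneg _)) (by norm_num)
      simp only [Nat.cast_zero] at hX2
      linarith
    have hs1 : 1 ≤ X.card := by
      obtain ⟨e, he⟩ := Finset.card_pos.1 (by omega : 0 < m X)
      have := (Finset.mem_filter.1 he).2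
      exact Finset.card_pos.2 ⟨e.out.1, this e.out.1 (Sym2.out_fst_mem e)⟩
    have hw : 2 * m X ≤ X.card * X.card - X.card := sparse7_within_card G X
    have hss : X.card ≤ X.card * X.card := Nat.le_mul_of_pos_left _ (by omega)
    have hw2 : 2 * m X + X.card ≤ X.card * X.card := (Nat.le_sub_iff_add_le hss).1 hw
    have hw3 : 2 * (m X : ℝ) + X.card ≤ (X.card : ℝ) * X.card := by exact_mod_cast hw2
    have h4 : (4:ℝ) < X.card := by
      have hs1' : (1:ℝ) ≤ (X.card : ℝ) := by exact_mod_cast hs1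
      nlinarith [hX2, hw3, hd3, hs1']
    have : 4 < X.card := by exact_mod_cast h4
    omega
  -- r and its properties
  set r : ℝ := (Real.sqrt 2)⁻¹ with hr
  have hs2 : Real.sqrt 2 ^ 2 = 2 := Real.sq_sqrt (by norm_num)
  have hs0 : (0:ℝ) ≤ Real.sqrt 2 := Real.sqrt_nonneg 2
  have h141 : (1.41 : ℝ) ≤ Real.sqrt 2 := by nlinarith
  have hrpos : 0 < r := by rw [hr]; positivity
  have hr71 : r ≤ 0.71 := by
    rw [hr]
    have h1 : (1.41:ℝ)⁻¹ ≤ 0.71 := by norm_num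
    have h2 : (Real.sqrt 2)⁻¹ ≤ (1.41:ℝ)⁻¹ := by
      apply inv_anti₀ (by norm_num) h141
    linarith
  -- Step B : per-bad-set real bound
  have stepB : ∀ X ∈ Bad, (N X : ℝ) ≤
      (2:ℝ)^E * ((X.card.factorial : ℝ) / (n:ℝ)^X.card * r^X.card) := by
    intro X hX
    have hmE : m X ≤ E := by
      rw [hE, hm]
      exact Finset.card_filter_le _ _
    have hcount := sparse7_count G X
    have hcount' : (N X : ℝ) ≤ (X.card.factorial : ℝ) * 2 ^ (E - m X) := by
      exact_mod_cast hcount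
    -- power bound
    have hms : d * X.card / 2 < (m X : ℝ) := hbadm X hX
    have hpow : ((n:ℝ))^X.card * (Real.sqrt 2)^X.card ≤ (2:ℝ)^(m X) := by
      have e1 : ((n:ℝ))^X.card * (Real.sqrt 2)^X.card
          = (2:ℝ) ^ ((d * X.card / 2 : ℝ)) := by
        have hds : (d * X.card / 2 : ℝ)
            = Real.logb 2 n * (X.card : ℝ) + (1/2) * (X.card : ℝ) := by
          rw [hd]; ring
        rw [hds, Real.rpow_add (by norm_num : (0:ℝ) < 2)]
        rw [Real.rpow_mul (by norm_num : (0:ℝ) ≤ 2), Real.rpow_mul (by norm_num : (0:ℝ) ≤ 2)]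
        rw [Real.rpow_natCast, Real.rpow_natCast]
        rw [Real.rpow_logb (by norm_num) (by norm_num) hnpos]
        rw [← Real.sqrt_eq_rpow]
      have e2 : (2:ℝ) ^ ((d * X.card / 2 : ℝ)) ≤ (2:ℝ) ^ ((m X : ℝ)) := by
        apply Real.rpow_le_rpow_left_iff (by norm_num : (1:ℝ) < 2) |>.2
        linarith
      rw [e1]
      calc (2:ℝ) ^ ((d * X.card / 2 : ℝ)) ≤ (2:ℝ) ^ ((m X : ℝ)) := e2
        _ = (2:ℝ) ^ (m X) := Real.rpow_natCast 2 (m X)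
    have hposns : (0:ℝ) < (n:ℝ)^X.card * (Real.sqrt 2)^X.card := by positivity
    calc (N X : ℝ) ≤ (X.card.factorial : ℝ) * 2 ^ (E - m X) := hcount'
      _ = (X.card.factorial : ℝ) * ((2:ℝ)^E * ((2:ℝ)^(m X))⁻¹) := by
          rw [pow_sub₀ (2:ℝ) (by norm_num) hmE]
      _ = (2:ℝ)^E * ((X.card.factorial : ℝ) * ((2:ℝ)^(m X))⁻¹) := by ring
      _ ≤ (2:ℝ)^E * ((X.card.factorial : ℝ) *
            ((n:ℝ)^X.card * (Real.sqrt 2)^X.card)⁻¹) := by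
          apply mul_le_mul_of_nonneg_left _ (by positivity)
          apply mul_le_mul_of_nonneg_left _ (by positivity)
          exact inv_anti₀ hposns hpow
      _ = (2:ℝ)^E * ((X.card.factorial : ℝ) / (n:ℝ)^X.card * r^X.card) := by
          rw [hr, inv_pow, mul_inv]
          ring
  -- the weight function
  set g : ℕ → ℝ := fun s => if 5 ≤ s then (s.factorial : ℝ) / (n:ℝ)^s * r^s else 0 with hg
  have hgnonneg : ∀ s, 0 ≤ g s := by
    intro s
    rw [hg]
    dsimp only
    split
    · positivity
    · exact le_rfl
  
  have hgX : ∀ X ∈ Bad, (X.card.factorial : ℝ) / (n:ℝ)^X.card * r^X.card = g X.card := by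
    intro X hX
    rw [hg]
    dsimp only
    rw [if_pos (hcard5 X hX)]
  have hsum1 : ∑ X ∈ Bad, (N X : ℝ) ≤ (2:ℝ)^E * ∑ X ∈ Bad, g X.card := by
    rw [Finset.mul_sum]
    refine Finset.sum_le_sum (fun X hX => ?_)
    rw [← hgX X hX]
    exact stepB X hX
  have hsum2 : ∑ X ∈ Bad, g X.card ≤ ∑ X : Finset V, g X.card :=
    Finset.sum_le_sum_of_subset_of_nonneg (Finset.subset_univ _) (fun X _ _ => hgnonneg _)
  have hsum3 : ∑ X : Finset V, g X.card = ∑ j ∈ Finset.range (n+1), (n.choose j) • g j := by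
    rw [← Finset.powerset_univ, Finset.sum_powerset, Finset.card_univ, hn]
    exact Finset.sum_congr rfl (fun j _ => by
      rw [Finset.sum_powersetCard, Finset.card_univ, hn])
  have hsum4 : ∑ j ∈ Finset.range (n+1), (n.choose j) • g j
      ≤ ∑ j ∈ Finset.range (n+1), (if 5 ≤ j then r^j else 0) := by
    refine Finset.sum_le_sum (fun j _ => ?_)
    rw [nsmul_eq_mul, hg]
    dsimp only
    split
    · next hj =>
      have hnat : n.choose j * j.factorial ≤ n^j := by
        have h : n.choose j * j.factorial = n.descFactorial j := by
          rw [Nat.descFactorial_eq_factorial_mul_choose]; ring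
        rw [h]
        exact Nat.descFactorial_le_pow n j
      have h1 : (n.choose j : ℝ) * (j.factorial : ℝ) ≤ (n:ℝ)^j := by exact_mod_cast hnat
      have hnj : (0:ℝ) < (n:ℝ)^j := by positivity
      have h2 : (n.choose j : ℝ) * ((j.factorial : ℝ)/(n:ℝ)^j) ≤ 1 := by
        rw [← mul_div_assoc, div_le_one hnj]
        exact h1
      calc (n.choose j : ℝ) * ((j.factorial : ℝ)/(n:ℝ)^j * r^j)
          = ((n.choose j : ℝ) * ((j.factorial : ℝ)/(n:ℝ)^j)) * r^j := by ring
        _ ≤ 1 * r^j := mul_le_mul_of_nonneg_right h2 (by positivity)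
        _ = r^j := one_mul _
    · simp
  have hsum5 : ∑ j ∈ Finset.range (n+1), (if 5 ≤ j then r^j else 0)
      = ∑ j ∈ Finset.Ico 5 (n+1), r^j := by
    rw [← Finset.sum_filter]
    congr 1
    ext j
    simp only [Finset.mem_filter, Finset.mem_range, Finset.mem_Ico]
    omega
  have hsum6 : ∑ j ∈ Finset.Ico 5 (n+1), r^j ≤ ∑ j ∈ Finset.Ico 5 (n+5), r^j :=
    Finset.sum_le_sum_of_subset_of_nonneg (Finset.Ico_subset_Ico le_rfl (by omega))
      (fun j _ _ => by positivity)
  have hrne1 : r ≠ 1 := by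
    intro h
    rw [h] at hr71
    norm_num at hr71
  have hsum7 : ∑ j ∈ Finset.Ico 5 (n+5), r^j = (r^5 - r^(n+5))/(1 - r) := by
    rw [geom_sum_Ico hrne1 (by omega)]
    rw [← neg_div_neg_eq]
    congr 1 <;> ring
  have hfinal : (r^5 - r^(n+5))/(1 - r) < 1 := by
    have h1 : r^5 - r^(n+5) ≤ (0.71:ℝ)^5 := by
      have ha : r^5 ≤ (0.71:ℝ)^5 := pow_le_pow_left₀ hrpos.le hr71 5
      have hb : 0 ≤ r^(n+5) := by positivity
      linarith
    have h2 : (0.29:ℝ) ≤ 1 - r := by linarith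
    calc (r^5 - r^(n+5))/(1 - r) ≤ (0.71:ℝ)^5 / 0.29 := by
          apply div_le_div₀ (by norm_num) h1 (by norm_num) h2
      _ < 1 := by norm_num
  have hEpos : (0:ℝ) < (2:ℝ)^E := by positivity
  have hchain : (2:ℝ)^E ≤ (2:ℝ)^E * ((r^5 - r^(n+5))/(1-r)) := by
    calc (2:ℝ)^E ≤ ∑ X ∈ Bad, (N X:ℝ) := by exact_mod_cast stepA
      _ ≤ (2:ℝ)^E * ∑ X ∈ Bad, g X.card := hsum1
      _ ≤ (2:ℝ)^E * ((r^5 - r^(n+5))/(1-r)) := by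
          apply mul_le_mul_of_nonneg_left _ hEpos.le
          calc ∑ X ∈ Bad, g X.card ≤ ∑ X : Finset V, g X.card := hsum2
            _ = ∑ j ∈ Finset.range (n+1), (n.choose j) • g j := hsum3
            _ ≤ ∑ j ∈ Finset.range (n+1), (if 5 ≤ j then r^j else 0) := hsum4
            _ = ∑ j ∈ Finset.Ico 5 (n+1), r^j := hsum5
            _ ≤ ∑ j ∈ Finset.Ico 5 (n+5), r^j := hsum6
            _ = (r^5 - r^(n+5))/(1 - r) := hsum7
  have hlt := mul_lt_mul_of_pos_left hfinal hEpos
  rw [mul_one] at hlt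
  linarith


end Sparse7Aux

/-- Every graph of order `n` has an orientation in which every acyclic set is
`(2 log₂ n + 1)`-sparse. -/
theorem stmt_7 [Fintype V] (G : SimpleGraph V) (n : ℕ) (hn : Fintype.card V = n)
    (d : ℝ) (hd : d = 2 * Real.logb 2 n + 1) :
    ∃ A : V → V → Prop, IsOrientation G A ∧
      ∀ X : Set V, AcyclicSet A X →
        (Set.ncard {e : Sym2 V | e ∈ G.edgeSet ∧ ∀ v ∈ e, v ∈ X} : ℝ) ≤
          d * X.ncard / 2 := by
  classical
  rcases le_or_gt 2 n with hn2 | hn2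
  · letI : LinearOrder V := LinearOrder.lift' (Fintype.equivFin V) (Fintype.equivFin V).injective
    obtain ⟨c, hc⟩ := sparse7_main G n hn hn2 d hd
    refine ⟨sparse7_A G c, sparse7_orient G c, ?_⟩
    intro X hX
    have h1 : AcyclicSet (sparse7_A G c) ↑X.toFinset := by
      rw [Set.coe_toFinset]; exact hX
    have h2 := hc X.toFinset h1
    have h3 : {e : Sym2 V | e ∈ G.edgeSet ∧ ∀ v ∈ e, v ∈ X}.ncard
        = (G.edgeFinset.filter (fun e => ∀ v ∈ e, v ∈ X.toFinset)).card := by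
      rw [← Set.ncard_coe_finset]
      congr 1
      ext e
      simp only [Set.mem_setOf_eq, Finset.coe_filter, SimpleGraph.mem_edgeFinset,
        Set.mem_toFinset]
    have h4 : X.ncard = X.toFinset.card := Set.ncard_eq_toFinset_card' X
    rw [h3, h4]
    exact h2
  · -- n ≤ 1 : the graph has no edges
    have hnoadj : ∀ u v : V, ¬ G.Adj u v := by
      intro u v h
      have : Nontrivial V := ⟨⟨u, v, h.ne⟩⟩
      have := Fintype.one_lt_card (α := V)
      omega
    have hd1 : d = 1 := by
      interval_cases n
      · rw [hd]; norm_num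
      · rw [hd]; norm_num
    refine ⟨fun _ _ => False, ⟨?_, by simp⟩, ?_⟩
    · intro u v
      constructor
      · intro h; exact absurd h (hnoadj u v)
      · rintro (h | h) <;> exact h.elim
    · intro X _
      have hempty : {e : Sym2 V | e ∈ G.edgeSet ∧ ∀ v ∈ e, v ∈ X} = ∅ := by
        ext e
        simp only [Set.mem_setOf_eq, Set.mem_empty_iff_false, iff_false, not_and]
        intro he
        exfalso
        induction e using Sym2.ind with
        | _ u v => exact hnoadj u v (G.mem_edgeSet.1 he)
      rw [hempty]
      simp only [Set.ncard_empty, Nat.cast_zero]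
      rw [hd1]
      positivity
end

section
/- For every graph G of order n, the list chromatic number satisfies χ_ℓ(G) ≤ 6·χ⃗(G)·(1 + ⌊log₂ n⌋), where χ⃗(G) is the maximum dichromatic number over all orientations of G. -/
open Set

variable {V : Type*}

/-- List chromatic number of a simple graph. -/
noncomputable def listChrNum (G : SimpleGraph V) : ℕ :=
  sInf {k | ∀ L : V → Finset ℕ, (∀ v, (L v).card = k) →
    ∃ c : V → ℕ, (∀ v, c v ∈ L v) ∧ ∀ u v, G.Adj u v → c u ≠ c v}


section Aux
open Finset
open scoped Classical

variable {A : V → V → Prop}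

lemma diCycleIn_mono {S S' : Set V} (h : DiCycleIn A S) (hs : S ⊆ S') : DiCycleIn A S' := by
  obtain ⟨n, f, hf, hmem, harc⟩ := h
  exact ⟨n, f, hf, fun i => hs (hmem i), harc⟩

/-- If every vertex of a nonempty finite set has an out-neighbour in the set, there is
a directed cycle within the set. -/
lemma dicycle_of_no_sink (S : Finset V) (hne : S.Nonempty)
    (h : ∀ v ∈ S, ∃ u ∈ S, A v u) : DiCycleIn A ↑S := by
  classical
  -- successor function
  choose! f hfS hfA using h
  obtain ⟨v₀, hv₀⟩ := hne
  let g : ℕ → V := fun i => f^[i] v₀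
  have hg : ∀ i, g i ∈ S := by
    intro i
    induction i with
    | zero => exact hv₀
    | succ i ih => simpa [g, Function.iterate_succ_apply'] using hfS _ ih
  have hgsucc : ∀ i, g (i + 1) = f (g i) := by
    intro i; simp [g, Function.iterate_succ_apply']
  have hgarc : ∀ i, A (g i) (g (i + 1)) := fun i => by
    rw [hgsucc]; exact hfA _ (hg i)
  -- pigeonhole: some repetition among g 0, ..., g S.card
  have hrep : ∃ j, ∃ i < j, g i = g j := by
    obtain ⟨a, _, b, _, hab, heq⟩ :=
      Finset.exists_ne_map_eq_of_card_lt_of_maps_to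
        (s := Finset.range (S.card + 1)) (t := S)
        (by simp) (fun i _ => hg i)
    rcases lt_or_gt_of_ne hab with hlt | hlt
    · exact ⟨b, a, hlt, heq⟩
    · exact ⟨a, b, hlt, heq.symm⟩
  -- minimal j with a repetition
  let j := Nat.find hrep
  obtain ⟨i, hij, hgij⟩ : ∃ i < j, g i = g j := Nat.find_spec hrep
  have hjmin : ∀ j' < j, ¬ ∃ i' < j', g i' = g j' := fun j' hj' => Nat.find_min hrep hj'
  -- the cycle g i, g (i+1), ..., g (j-1)
  have hm : 1 ≤ j - i := Nat.le_sub_of_add_le (by omega)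
  refine ⟨j - i - 1, fun x => g (i + x.val), ?_, fun x => hg _, ?_⟩
  · intro a b hab
    by_contra hne'
    rcases lt_or_gt_of_ne (fun h : (a:ℕ) = (b:ℕ) => hne' (Fin.ext h)) with hlt | hlt
    · exact hjmin (i + b.val) (by omega) ⟨i + a.val, by omega, hab⟩
    · exact hjmin (i + a.val) (by omega) ⟨i + b.val, by omega, hab.symm⟩
  · intro x
    show A (g (i + x.val)) (g (i + ((x + 1 : Fin (j - i - 1 + 1))).val))
    have hxlt : x.val < j - i := by omega
    by_cases hlast : x.val = j - i - 1
    · have hx1 : ((x + 1 : Fin (j - i - 1 + 1))).val = 0 := by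
        have : x.val + 1 = j - i - 1 + 1 := by omega
        simp [Fin.add_def, this]
      rw [hx1]
      have : i + x.val + 1 = j := by omega
      have harc' := hgarc (i + x.val)
      rw [this, ← hgij] at harc'
      simpa using harc'
    · have hx1 : ((x + 1 : Fin (j - i - 1 + 1))).val = x.val + 1 := by
        have hxlt' : x.val + 1 < j - i - 1 + 1 := by omega
        simp [Fin.add_def, Nat.mod_eq_of_lt hxlt']
      rw [hx1]
      have : i + (x.val + 1) = i + x.val + 1 := by omega
      rw [this]
      exact hgarc _

/-- A finite acyclic set has a "sink": a vertex with no out-arc inside the set. -/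
lemma exists_sink (S : Finset V) (hne : S.Nonempty) (h : ¬ DiCycleIn A ↑S) :
    ∃ v ∈ S, ∀ u ∈ S, ¬ A v u := by
  by_contra hc
  push_neg at hc
  exact h (dicycle_of_no_sink S hne fun v hv => hc v hv)

/-- Topological numbering of a finite acyclic set. -/
lemma exists_topo (S : Finset V) (h : ¬ DiCycleIn A ↑S) :
    ∃ σ : V → ℕ, (∀ v ∈ S, σ v < S.card) ∧ (Set.InjOn σ ↑S) ∧
      (∀ u ∈ S, ∀ v ∈ S, A u v → σ u < σ v) := by
  classical
  induction S using Finset.strongInduction with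
  | _ S ih =>
    rcases S.eq_empty_or_nonempty with rfl | hne
    · exact ⟨fun _ => 0, by simp, by simp, by simp⟩
    · obtain ⟨v, hv, hsink⟩ := exists_sink S hne h
      have hsub : S.erase v ⊂ S := Finset.erase_ssubset hv
      have hacy : ¬ DiCycleIn A ↑(S.erase v) := fun hcy =>
        h (diCycleIn_mono hcy (by exact_mod_cast Finset.erase_subset _ _))
      obtain ⟨σ', h1, h2, h3⟩ := ih _ hsub hacy
      have hcard : (S.erase v).card = S.card - 1 := Finset.card_erase_of_mem hv
      refine ⟨fun u => if u = v then S.card - 1 else σ' u, ?_, ?_, ?_⟩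
      · intro u hu
        show (if u = v then S.card - 1 else σ' u) < S.card
        by_cases hu' : u = v
        · rw [if_pos hu']
          have : 1 ≤ S.card := Finset.card_pos.mpr hne
          omega
        · simp only [if_neg hu']
          have := h1 u (Finset.mem_erase.mpr ⟨hu', hu⟩)
          omega
      · intro a ha b hb hab
        simp only [Set.mem_setOf_eq] at hab
        change (if a = v then S.card - 1 else σ' a) = (if b = v then S.card - 1 else σ' b) at hab
        by_cases ha' : a = v <;> by_cases hb' : b = v
        · rw [ha', hb']
        · rw [if_pos ha', if_neg hb'] at hab
          have := h1 b (Finset.mem_erase.mpr ⟨hb', hb⟩)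
          rw [hcard] at this; omega
        · rw [if_neg ha', if_pos hb'] at hab
          have := h1 a (Finset.mem_erase.mpr ⟨ha', ha⟩)
          rw [hcard] at this; omega
        · rw [if_neg ha', if_neg hb'] at hab
          exact h2 (Finset.mem_erase.mpr ⟨ha', ha⟩) (Finset.mem_erase.mpr ⟨hb', hb⟩) hab
      · intro a ha b hb harc
        show (if a = v then S.card - 1 else σ' a) < (if b = v then S.card - 1 else σ' b)
        by_cases ha' : a = v
        · exact absurd harc (ha' ▸ hsink b hb)
        · by_cases hb' : b = v
          · simp only [if_neg ha', if_pos hb']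
            have := h1 a (Finset.mem_erase.mpr ⟨ha', ha⟩)
            rw [hcard] at this; omega
          · simp only [if_neg ha', if_neg hb']
            by_cases hbv : b ∈ S.erase v
            · exact h3 a (Finset.mem_erase.mpr ⟨ha', ha⟩) b hbv harc
            · exact absurd (Finset.mem_erase.mpr ⟨hb', hb⟩) hbv

/-- Greedy list colouring on a "degenerate" finite set. -/
lemma greedy (G : SimpleGraph V) (d : ℕ) (W : Finset V) (ℓ : V → Finset ℕ)
    (hdeg : ∀ T ⊆ W, T.Nonempty → ∃ v ∈ T, (T.filter (G.Adj v)).card ≤ d)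
    (hl : ∀ v ∈ W, d + 1 ≤ (ℓ v).card) :
    ∃ c : V → ℕ, (∀ v ∈ W, c v ∈ ℓ v) ∧
      ∀ u ∈ W, ∀ w ∈ W, G.Adj u w → c u ≠ c w := by
  classical
  induction W using Finset.strongInduction with
  | _ W ih =>
    rcases W.eq_empty_or_nonempty with rfl | hne
    · exact ⟨fun _ => 0, by simp, by simp⟩
    · obtain ⟨v, hv, hvdeg⟩ := hdeg W subset_rfl hne
      have hsub : W.erase v ⊂ W := Finset.erase_ssubset hv
      obtain ⟨c', hc'mem, hc'prop⟩ := ih _ hsub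
        (fun T hT hTne => hdeg T (hT.trans (Finset.erase_subset _ _)) hTne)
        (fun u hu => hl u (Finset.mem_of_mem_erase hu))
      set N : Finset V := (W.erase v).filter (G.Adj v) with hN
      have hNW : N ⊆ W.filter (G.Adj v) := Finset.filter_subset_filter _ (Finset.erase_subset _ _)
      have hNcard : (N.image c').card ≤ d := by
        refine le_trans (Finset.card_image_le) (le_trans (Finset.card_le_card ?_) hvdeg)
        exact hNW
      have hex : (ℓ v \ N.image c').Nonempty := by
        rw [← Finset.card_pos]
        have h1 := Finset.le_card_sdiff (N.image c') (ℓ v)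
        have h2 := hl v hv
        omega
      obtain ⟨col, hcol⟩ := hex
      have hcolmem : col ∈ ℓ v := (Finset.mem_sdiff.mp hcol).1
      have hcolnot : col ∉ N.image c' := (Finset.mem_sdiff.mp hcol).2
      refine ⟨Function.update c' v col, ?_, ?_⟩
      · intro u hu
        by_cases hu' : u = v
        · subst hu'; simpa using hcolmem
        · rw [Function.update_of_ne hu']
          exact hc'mem u (Finset.mem_erase.mpr ⟨hu', hu⟩)
      · intro u hu w hw hadj
        by_cases hu' : u = v <;> by_cases hw' : w = v
        · subst hu'; subst hw'; exact absurd hadj (G.loopless.irrefl _)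
        · subst hu'
          rw [Function.update_self, Function.update_of_ne hw']
          intro heq
          exact hcolnot (heq ▸ Finset.mem_image_of_mem c'
            (Finset.mem_filter.mpr ⟨Finset.mem_erase.mpr ⟨hw', hw⟩, hadj⟩))
        · subst hw'
          rw [Function.update_self, Function.update_of_ne hu']
          intro heq
          exact hcolnot (heq ▸ Finset.mem_image_of_mem c'
            (Finset.mem_filter.mpr ⟨Finset.mem_erase.mpr ⟨hu', hu⟩, G.adj_symm hadj⟩))
        · rw [Function.update_of_ne hu', Function.update_of_ne hw']
          exact hc'prop u (Finset.mem_erase.mpr ⟨hu', hu⟩) w (Finset.mem_erase.mpr ⟨hw', hw⟩) hadj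

lemma dicolourable_card [Fintype V] (A : V → V → Prop) (h : ∀ v, ¬ A v v) :
    Dicolourable A (Fintype.card V) := by
  refine ⟨Fintype.equivFin V, fun c => ?_⟩
  rintro ⟨m, f, hinj, hmem, harc⟩
  have hconst : ∀ i, f i = f 0 := by
    intro i
    have h1 : Fintype.equivFin V (f i) = c := hmem i
    have h2 : Fintype.equivFin V (f 0) = c := hmem 0
    exact (Fintype.equivFin V).injective (h1.trans h2.symm)
  have := harc 0
  rw [hconst (0 + 1), hconst 0] at this
  exact h _ this

lemma dicolourable_mono {A : V → V → Prop} {j k : ℕ} (hjk : j ≤ k)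
    (h : Dicolourable A j) : Dicolourable A k := by
  obtain ⟨φ, hφ⟩ := h
  refine ⟨fun v => Fin.castLE hjk (φ v), fun c => ?_⟩
  rintro ⟨m, f, hinj, hmem, harc⟩
  refine hφ (φ (f 0)) ⟨m, f, hinj, fun i => ?_, harc⟩
  have h1 : Fin.castLE hjk (φ (f i)) = c := hmem i
  have h2 : Fin.castLE hjk (φ (f 0)) = c := hmem 0
  exact (Fin.castLE_injective hjk) (h1.trans h2.symm)

lemma dichrNum_le_card [Fintype V] {G : SimpleGraph V} {A : V → V → Prop}
    (hA : IsOrientation G A) : dichrNum A ≤ Fintype.card V :=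
  Nat.sInf_le (dicolourable_card A (fun v hv => hA.2 v v hv hv))

lemma orientation_dicolourable [Fintype V] (G : SimpleGraph V) {A : V → V → Prop}
    (hA : IsOrientation G A) : Dicolourable A (maxDichr G) := by
  have hne : {k | Dicolourable A k}.Nonempty :=
    ⟨Fintype.card V, dicolourable_card A fun v hv => hA.2 v v hv hv⟩
  have h1 : Dicolourable A (dichrNum A) := Nat.sInf_mem hne
  have h2 : dichrNum A ≤ maxDichr G := by
    refine le_csSup ⟨Fintype.card V, ?_⟩ ⟨A, hA, rfl⟩
    rintro k ⟨A', hA', rfl⟩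
    exact dichrNum_le_card hA'
  exact dicolourable_mono h2 h1

lemma one_le_maxDichr [Fintype V] (G : SimpleGraph V) (hV : 0 < Fintype.card V) :
    1 ≤ maxDichr G := by
  classical
  set ε := Fintype.equivFin V
  set A₀ : V → V → Prop := fun u v => G.Adj u v ∧ ε u < ε v with hA₀
  have hor : IsOrientation G A₀ := by
    constructor
    · intro u v
      constructor
      · intro h
        rcases lt_or_gt_of_ne (fun he : ε u = ε v => h.ne (ε.injective he)) with hlt | hlt
        · exact Or.inl ⟨h, hlt⟩
        · exact Or.inr ⟨G.adj_symm h, hlt⟩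
      · rintro (⟨h, _⟩ | ⟨h, _⟩)
        · exact h
        · exact G.adj_symm h
    · rintro u v ⟨_, h1⟩ ⟨_, h2⟩
      exact absurd h2 (not_lt_of_gt h1)
  have hnz : dichrNum A₀ ≠ 0 := by
    intro h0
    rcases (Nat.sInf_eq_zero.mp h0) with hmem | hemp
    · obtain ⟨φ, -⟩ := hmem
      obtain ⟨v⟩ := Fintype.card_pos_iff.mp hV
      exact (φ v).elim0
    · have hdc : Dicolourable A₀ (Fintype.card V) :=
        dicolourable_card A₀ (fun v hv => hor.2 v v hv hv)
      rw [Set.eq_empty_iff_forall_notMem] at hemp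
      exact hemp _ hdc
  have h2 : dichrNum A₀ ≤ maxDichr G := by
    refine le_csSup ⟨Fintype.card V, ?_⟩ ⟨A₀, hor, rfl⟩
    rintro k ⟨A', hA', rfl⟩
    exact dichrNum_le_card hA'
  omega

section Orient
variable [Fintype V]

/-- Orientation of `G` determined by a bit function. -/
def orientOf (G : SimpleGraph V) (h : V × V → Bool) : V → V → Prop :=
  fun u v => G.Adj u v ∧
    ((Fintype.equivFin V u < Fintype.equivFin V v ∧ h (u, v) = true) ∨
     (Fintype.equivFin V v < Fintype.equivFin V u ∧ h (v, u) = false))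

lemma orientOf_isOrientation (G : SimpleGraph V) (h : V × V → Bool) :
    IsOrientation G (orientOf G h) := by
  set ε := Fintype.equivFin V
  constructor
  · intro u v
    constructor
    · intro hadj
      rcases lt_or_gt_of_ne (fun he : ε u = ε v => hadj.ne (ε.injective he)) with hlt | hlt
      · cases hh : h (u, v)
        · exact Or.inr ⟨G.adj_symm hadj, Or.inr ⟨hlt, hh⟩⟩
        · exact Or.inl ⟨hadj, Or.inl ⟨hlt, hh⟩⟩
      · cases hh : h (v, u)
        · exact Or.inl ⟨hadj, Or.inr ⟨hlt, hh⟩⟩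
        · exact Or.inr ⟨G.adj_symm hadj, Or.inl ⟨hlt, hh⟩⟩
    · rintro (⟨ha, -⟩ | ⟨ha, -⟩)
      · exact ha
      · exact G.adj_symm ha
  · rintro u v ⟨-, (⟨h1, hb1⟩ | ⟨h1, hb1⟩)⟩ ⟨-, (⟨h2, hb2⟩ | ⟨h2, hb2⟩)⟩
    · exact absurd h2 (not_lt_of_gt h1)
    · simp [hb1] at hb2
    · simp [hb2] at hb1
    · exact absurd h2 (not_lt_of_gt h1)

/-- The set of (ordered, increasing) edges of `G` inside `T`. -/
noncomputable def ES (G : SimpleGraph V) (T : Finset V) : Finset (V × V) := by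
  classical
  exact (T ×ˢ T).filter (fun p => G.Adj p.1 p.2 ∧ Fintype.equivFin V p.1 < Fintype.equivFin V p.2)

lemma sum_deg_eq (G : SimpleGraph V) (T : Finset V) :
    ∑ v ∈ T, ((T.filter (G.Adj v)).card) = 2 * (ES G T).card := by
  classical
  set ε := Fintype.equivFin V
  set P : Finset (V × V) := (T ×ˢ T).filter (fun p => G.Adj p.1 p.2) with hP
  have h1 : ∑ v ∈ T, ((T.filter (G.Adj v)).card) = P.card := by
    have : P = T.biUnion (fun v => (T.filter (G.Adj v)).image (fun u => (v, u))) := by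
      ext p
      simp only [hP, Finset.mem_filter, Finset.mem_product, Finset.mem_biUnion,
        Finset.mem_image]
      constructor
      · rintro ⟨⟨hp1, hp2⟩, hadj⟩
        exact ⟨p.1, hp1, p.2, ⟨hp2, hadj⟩, rfl⟩
      · rintro ⟨v, hv, u, ⟨hu1, hu2⟩, rfl⟩
        exact ⟨⟨hv, hu1⟩, hu2⟩
    rw [this, Finset.card_biUnion]
    · refine Finset.sum_congr rfl (fun v _ => ?_)
      rw [Finset.card_image_of_injective _ (fun a b hab => by
        simpa using congrArg Prod.snd hab)]
    · intro a _ b _ hab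
      simp only [Finset.disjoint_left, Finset.mem_image]
      rintro p ⟨u, -, rfl⟩ ⟨u', -, h'⟩
      exact hab (congrArg Prod.fst h').symm
  have h2 : P.filter (fun p => ε p.1 < ε p.2) = ES G T := by
    simp only [ES, hP, Finset.filter_filter]
    rfl
  have h3 : (P.filter (fun p => ¬ ε p.1 < ε p.2)).card = (ES G T).card := by
    rw [← h2]
    have himg : (P.filter (fun p => ¬ ε p.1 < ε p.2)).image Prod.swap
        = P.filter (fun p => ε p.1 < ε p.2) := by
      ext ⟨u, v⟩
      simp only [Finset.mem_image, Finset.mem_filter, hP, Finset.mem_product, Prod.exists]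
      constructor
      · rintro ⟨a, b, ⟨⟨⟨ha, hb⟩, hadj⟩, hlt⟩, hswap⟩
        cases hswap
        refine ⟨⟨⟨hb, ha⟩, G.adj_symm hadj⟩, ?_⟩
        rcases lt_or_gt_of_ne (fun he : ε a = ε b => hadj.ne (ε.injective he)) with hlt' | hlt'
        · exact absurd hlt' hlt
        · exact hlt'
      · rintro ⟨⟨⟨hu, hv⟩, hadj⟩, hlt⟩
        exact ⟨v, u, ⟨⟨⟨hv, hu⟩, G.adj_symm hadj⟩, not_lt_of_gt hlt⟩, rfl⟩
    rw [← himg, Finset.card_image_of_injective _ Prod.swap_injective]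
  have h4 := Finset.card_filter_add_card_filter_not
    (s := P) (p := fun p => ε p.1 < ε p.2)
  have h5 : (P.filter (fun p => ε p.1 < ε p.2)).card = (ES G T).card := by rw [h2]
  rw [h1]
  omega

lemma exists_lowdeg (G : SimpleGraph V) (β : ℕ) (T : Finset V) (hne : T.Nonempty)
    (hE : (ES G T).card ≤ β * T.card) :
    ∃ v ∈ T, (T.filter (G.Adj v)).card ≤ 2 * β := by
  by_contra hc
  push_neg at hc
  have : ∑ v ∈ T, ((T.filter (G.Adj v)).card) ≥ ∑ v ∈ T, (2 * β + 1) :=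
    Finset.sum_le_sum (fun v hv => hc v hv)
  rw [Finset.sum_const, smul_eq_mul] at this
  rw [sum_deg_eq] at this
  have hTpos : 0 < T.card := Finset.card_pos.mpr hne
  nlinarith [hE]

end Orient

section Counting
open Finset
variable [Fintype V]

lemma card_acyclic_le (G : SimpleGraph V) (S : Finset V) :
    ((((univ : Finset (V × V → Bool)).filter
        (fun h => ¬ DiCycleIn (orientOf G h) ↑S)).card : ℚ)
      ≤ (Nat.factorial S.card : ℚ) * 2 ^ (Fintype.card (V × V) - (ES G S).card)) := by
  classical
  set Emb := (↥S ↪ Fin S.card)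
  set bt : Emb → V × V → Bool := fun τ p =>
    if hp : p.1 ∈ S ∧ p.2 ∈ S then decide ((τ ⟨p.1, hp.1⟩ : Fin S.card) < τ ⟨p.2, hp.2⟩)
    else true with hbt
  set w : Emb → V × V → Bool → ℚ := fun τ p x =>
    if p ∈ ES G S then (if x = bt τ p then 1 else 0) else 1 with hw
  have hwnonneg : ∀ τ p x, 0 ≤ w τ p x := by
    intro τ p x
    simp only [hw]
    split
    · split <;> norm_num
    · norm_num
  have hstep1 : ∀ h : V × V → Bool, ¬ DiCycleIn (orientOf G h) ↑S →
      ∃ τ : Emb, ∀ p ∈ ES G S, h p = bt τ p := by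
    intro h hacy
    obtain ⟨σ, hσ1, hσ2, hσ3⟩ := exists_topo S hacy
    refine ⟨⟨fun x => ⟨σ x.1, hσ1 _ x.2⟩, fun a b hab =>
      Subtype.ext (hσ2 a.2 b.2 (congrArg Fin.val hab))⟩, ?_⟩
    rintro ⟨u, v⟩ hp
    simp only [ES, mem_filter, mem_product] at hp
    obtain ⟨⟨hu, hv⟩, hadj, hlt⟩ := hp
    simp only [hbt]
    rw [dif_pos (⟨hu, hv⟩ : (u, v).1 ∈ S ∧ (u, v).2 ∈ S)]
    show h (u, v) = decide (σ u < σ v)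
    cases hh : h (u, v)
    · have harc : orientOf G h v u := ⟨G.adj_symm hadj, Or.inr ⟨hlt, hh⟩⟩
      have hvu := hσ3 v hv u hu harc
      symm
      simpa [decide_eq_false_iff_not] using by omega
    · have harc : orientOf G h u v := ⟨hadj, Or.inl ⟨hlt, hh⟩⟩
      have huv := hσ3 u hu v hv harc
      simp [huv]
  have hstep2 : ((((univ : Finset (V × V → Bool)).filter
        (fun h => ¬ DiCycleIn (orientOf G h) ↑S)).card : ℚ))
      ≤ ∑ h : V × V → Bool, ∑ τ : Emb, ∏ p : V × V, w τ p (h p) := by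
    rw [Finset.cast_card]
    refine le_trans (Finset.sum_le_sum (fun h hh => ?_))
      (Finset.sum_le_sum_of_subset_of_nonneg (Finset.filter_subset _ _) ?_)
    · obtain ⟨τ₀, hτ₀⟩ := hstep1 h (Finset.mem_filter.mp hh).2
      have hone : (∏ p : V × V, w τ₀ p (h p)) = 1 := by
        refine Finset.prod_eq_one (fun p _ => ?_)
        simp only [hw]
        by_cases hpe : p ∈ ES G S
        · rw [if_pos hpe, if_pos (hτ₀ p hpe)]
        · rw [if_neg hpe]
      refine le_trans (le_of_eq hone.symm) ?_
      exact Finset.single_le_sum (f := fun τ => ∏ p : V × V, w τ p (h p))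
        (fun τ _ => Finset.prod_nonneg (fun p _ => hwnonneg τ p (h p))) (Finset.mem_univ τ₀)
    · intro h _ _
      exact Finset.sum_nonneg (fun τ _ =>
        Finset.prod_nonneg (fun p _ => hwnonneg τ p (h p)))
  rw [Finset.sum_comm] at hstep2
  have hstep4 : ∀ τ : Emb, (∑ h : V × V → Bool, ∏ p : V × V, w τ p (h p))
      = 2 ^ (Fintype.card (V × V) - (ES G S).card) := by
    intro τ
    have hswap : (∑ h : V × V → Bool, ∏ p : V × V, w τ p (h p))
        = ∏ p : V × V, ∑ x : Bool, w τ p x := by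
      rw [← Fintype.piFinset_univ, Finset.sum_prod_piFinset]
    rw [hswap]
    have hfac : ∀ p : V × V, (∑ x : Bool, w τ p x) = if p ∈ ES G S then 1 else 2 := by
      intro p
      by_cases hpe : p ∈ ES G S
      · simp only [hw, if_pos hpe]
        rw [Fintype.sum_ite_eq' (bt τ p) (fun _ => (1 : ℚ))]
      · simp only [hw, if_neg hpe]
        simp
    rw [Finset.prod_congr rfl (fun p _ => hfac p)]
    rw [Finset.prod_ite (f := fun _ => (1 : ℚ)) (g := fun _ => (2 : ℚ))]
    rw [Finset.prod_const_one, Finset.prod_const, one_mul]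
    have hc1 : Finset.univ.filter (fun p => p ∈ ES G S) = ES G S := Finset.filter_univ_mem _
    have hc2 := Finset.card_filter_add_card_filter_not
      (s := (Finset.univ : Finset (V × V))) (p := fun p => p ∈ ES G S)
    rw [Finset.card_univ, hc1] at hc2
    congr 1
    omega
  rw [Finset.sum_congr rfl (fun τ _ => hstep4 τ), Finset.sum_const, Finset.card_univ] at hstep2
  have hemb : Fintype.card Emb = Nat.factorial S.card := by
    rw [Fintype.card_embedding_eq, Fintype.card_coe, Fintype.card_fin,
      Nat.descFactorial_self]
  rw [hemb] at hstep2
  simpa [nsmul_eq_mul] using hstep2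

lemma geom_sum_half (m : ℕ) : ∑ j ∈ Finset.range m, ((1:ℚ)/2) ^ (j+1) = 1 - (1/2) ^ m := by
  induction m with
  | zero => simp
  | succ m ih =>
    rw [Finset.sum_range_succ, ih]
    ring

lemma exists_good_orientation (G : SimpleGraph V) (β : ℕ)
    (hβ : 2 * Fintype.card V ≤ 2 ^ β) :
    ∃ h : V × V → Bool, ∀ S : Finset V,
      ¬ DiCycleIn (orientOf G h) ↑S → (ES G S).card ≤ β * S.card := by
  classical
  by_contra hcon
  push_neg at hcon
  set n := Fintype.card V with hn
  set N := Fintype.card (V × V) with hN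
  set bad : Finset (Finset V) := Finset.univ.powerset.filter
    (fun S => β * S.card + 1 ≤ (ES G S).card) with hbad
  have hcov : (Finset.univ : Finset (V × V → Bool))
      ⊆ bad.biUnion (fun S => Finset.univ.filter
        (fun h => ¬ DiCycleIn (orientOf G h) ↑S)) := by
    intro h _
    obtain ⟨S, hS1, hS2⟩ := hcon h
    refine Finset.mem_biUnion.mpr ⟨S, ?_, ?_⟩
    · exact Finset.mem_filter.mpr ⟨Finset.mem_powerset.mpr (Finset.subset_univ S), by omega⟩
    · exact Finset.mem_filter.mpr ⟨Finset.mem_univ _, hS1⟩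
  have hcard : (2 : ℚ) ^ N ≤ ∑ S ∈ bad,
      (((Finset.univ.filter (fun h => ¬ DiCycleIn (orientOf G h) ↑S)).card : ℚ)) := by
    have h1 := le_trans (Finset.card_le_card hcov) (Finset.card_biUnion_le)
    have h2 : (Finset.univ : Finset (V × V → Bool)).card = 2 ^ N := by
      rw [Finset.card_univ, Fintype.card_fun, Fintype.card_bool]
    rw [h2] at h1
    calc (2 : ℚ) ^ N = ((2 ^ N : ℕ) : ℚ) := by push_cast; ring
    _ ≤ _ := by
        rw [← Nat.cast_sum]
        exact_mod_cast Nat.cast_le.mpr h1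
  -- bound each bad term
  have hterm : ∀ S ∈ bad,
      (((Finset.univ.filter (fun h => ¬ DiCycleIn (orientOf G h) ↑S)).card : ℚ))
        ≤ (Nat.factorial S.card : ℚ) * 2 ^ N / 2 ^ (β * S.card + 1) := by
    intro S hS
    refine le_trans (card_acyclic_le G S) ?_
    have he1 : β * S.card + 1 ≤ (ES G S).card := (Finset.mem_filter.mp hS).2
    have he2 : (ES G S).card ≤ N := by
      rw [hN]
      exact le_trans (Finset.card_le_univ _) (le_of_eq (Finset.card_univ))
    have hp1 : (2:ℚ) ^ (N - (ES G S).card) = 2 ^ N / 2 ^ (ES G S).card := by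
      rw [eq_div_iff (by positivity), ← pow_add]
      congr 1
      omega
    rw [hp1]
    have hmono : (2:ℚ) ^ (β * S.card + 1) ≤ 2 ^ (ES G S).card :=
      pow_le_pow_right₀ (by norm_num) he1
    have hfpos : (0:ℚ) ≤ (Nat.factorial S.card : ℚ) := by positivity
    rw [mul_div_assoc]
    refine mul_le_mul_of_nonneg_left ?_ hfpos
    exact div_le_div_of_nonneg_left (by positivity) (by positivity) hmono
  have hsum1 : (2 : ℚ) ^ N ≤ ∑ S ∈ bad,
      (Nat.factorial S.card : ℚ) * 2 ^ N / 2 ^ (β * S.card + 1) :=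
    le_trans hcard (Finset.sum_le_sum hterm)
  have hsum2 : (∑ S ∈ bad, (Nat.factorial S.card : ℚ) * 2 ^ N / 2 ^ (β * S.card + 1))
      ≤ ∑ S ∈ (Finset.univ : Finset V).powerset,
        (Nat.factorial S.card : ℚ) * 2 ^ N / 2 ^ (β * S.card + 1) := by
    refine Finset.sum_le_sum_of_subset_of_nonneg (Finset.filter_subset _ _) ?_
    intro S _ _
    positivity
  have hsum3 : (∑ S ∈ (Finset.univ : Finset V).powerset,
        (Nat.factorial S.card : ℚ) * 2 ^ N / 2 ^ (β * S.card + 1))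
      = ∑ j ∈ Finset.range (n + 1), ((Finset.univ : Finset V).powersetCard j).card
          * ((Nat.factorial j : ℚ) * 2 ^ N / 2 ^ (β * j + 1)) := by
    rw [Finset.powerset_card_disjiUnion]; erw [Finset.sum_disjiUnion]
    rw [Finset.card_univ, ← hn]
    refine Finset.sum_congr rfl (fun j _ => ?_)
    have hcc : ∀ S ∈ (Finset.univ : Finset V).powersetCard j,
        (Nat.factorial S.card : ℚ) * 2 ^ N / 2 ^ (β * S.card + 1)
          = (Nat.factorial j : ℚ) * 2 ^ N / 2 ^ (β * j + 1) := by
      intro S hS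
      rw [(Finset.mem_powersetCard.mp hS).2]
    rw [Finset.sum_congr rfl hcc, Finset.sum_const, nsmul_eq_mul]
  have hsum4 : ∀ j ∈ Finset.range (n+1),
      (((Finset.univ : Finset V).powersetCard j).card : ℚ)
          * ((Nat.factorial j : ℚ) * 2 ^ N / 2 ^ (β * j + 1))
        ≤ 2 ^ N * (1/2) ^ (j + 1) := by
    intro j _
    rw [Finset.card_powersetCard, Finset.card_univ, ← hn]
    have h1 : ((n.choose j : ℚ)) * (Nat.factorial j : ℚ) = (n.descFactorial j : ℚ) := by
      rw [Nat.descFactorial_eq_factorial_mul_choose]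
      push_cast
      ring
    rw [div_eq_mul_inv, ← mul_assoc, ← mul_assoc, h1]
    have h2 : ((n.descFactorial j : ℚ)) ≤ (n:ℚ) ^ j := by
      exact_mod_cast Nat.descFactorial_le_pow n j
    have h3 : ((n:ℚ)) ^ j * ((2:ℚ) ^ (β * j + 1))⁻¹ ≤ (1/2) ^ (j+1) := by
      rw [div_pow, one_pow]
      rw [inv_eq_one_div, mul_comm, div_mul_eq_mul_div, one_mul]
      rw [div_le_div_iff₀ (by positivity) (by positivity)]
      have h4 : (n:ℚ) ^ j * 2 ^ (j+1) ≤ (2:ℚ) ^ (β * j + 1) := by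
        have h5 : ((2*n:ℕ):ℚ) ^ j ≤ ((2:ℚ) ^ β) ^ j := by
          refine pow_le_pow_left₀ (by positivity) ?_ j
          exact_mod_cast hβ
        calc (n:ℚ) ^ j * 2 ^ (j+1) = ((2*n:ℕ):ℚ) ^ j * 2 := by
              push_cast
              rw [mul_pow]
              ring
        _ ≤ ((2:ℚ) ^ β) ^ j * 2 := by nlinarith [h5]
        _ = (2:ℚ) ^ (β * j + 1) := by
              rw [← pow_mul, ← pow_succ]
      calc (n:ℚ) ^ j * 2 ^ (j+1) ≤ (2:ℚ) ^ (β * j + 1) := h4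
      _ = 1 * 2 ^ (β * j + 1) := by ring
    calc ((n.descFactorial j : ℚ)) * 2 ^ N * ((2:ℚ) ^ (β * j + 1))⁻¹
        ≤ (n:ℚ) ^ j * 2 ^ N * ((2:ℚ) ^ (β * j + 1))⁻¹ := by
          refine mul_le_mul_of_nonneg_right
            (mul_le_mul_of_nonneg_right h2 (by positivity)) (by positivity)
      _ = 2 ^ N * ((n:ℚ) ^ j * ((2:ℚ) ^ (β * j + 1))⁻¹) := by ring
      _ ≤ 2 ^ N * (1/2) ^ (j+1) := mul_le_mul_of_nonneg_left h3 (by positivity)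
  have hsum5 : (∑ j ∈ Finset.range (n+1), (2:ℚ) ^ N * ((1:ℚ)/2) ^ (j+1)) < 2 ^ N := by
    rw [← Finset.mul_sum, geom_sum_half]
    have h6 : (0:ℚ) < (1/2) ^ (n+1) := by positivity
    nlinarith [pow_pos (show (0:ℚ) < 2 by norm_num) N]
  have h7 := le_trans hsum1 (le_trans hsum2 (le_of_eq hsum3))
  have hfinal := lt_of_le_of_lt (le_trans h7 (Finset.sum_le_sum hsum4)) hsum5
  exact lt_irrefl _ hfinal

lemma exists_good_split (t a' k : ℕ) (ht : 1 ≤ t)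
    (C : Finset ℕ) (φ : V → Fin t) (ℓ : V → Finset ℕ)
    (hk : ∀ v, (ℓ v).card = k) (hsub : ∀ v, ℓ v ⊆ C) (hne : Nonempty V)
    (hnum : (Fintype.card V : ℚ) * 2 ^ a' * ((2 * t - 1 : ℕ)) ^ k < ((2 * t : ℕ)) ^ k) :
    ∃ g : ↥C → Fin t, ∀ v,
      a' + 1 ≤ ((Finset.univ : Finset ↥C).filter
        (fun (c : ↥C) => (c : ℕ) ∈ ℓ v ∧ g c = φ v)).card := by
  classical
  by_contra hcon
  push_neg at hcon
  set M := C.card with hM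
  have hMk : k ≤ M := by
    obtain ⟨v⟩ := hne
    rw [hM, ← hk v]
    exact Finset.card_le_card (hsub v)
  set bad : V → Finset (↥C → Fin t) := fun v => Finset.univ.filter
    (fun g => ((Finset.univ : Finset ↥C).filter
        (fun (c : ↥C) => (c : ℕ) ∈ ℓ v ∧ g c = φ v)).card ≤ a') with hbad
  have hcov : (Finset.univ : Finset (↥C → Fin t)) ⊆ Finset.univ.biUnion bad := by
    intro g _
    obtain ⟨v, hv⟩ := hcon g
    have : ((Finset.univ : Finset ↥C).filter
        (fun (c : ↥C) => (c : ℕ) ∈ ℓ v ∧ g c = φ v)).card ≤ a' := by omega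
    exact Finset.mem_biUnion.mpr ⟨v, Finset.mem_univ v, Finset.mem_filter.mpr ⟨Finset.mem_univ g, this⟩⟩
  -- count each bad set
  have hkfilter : ∀ v, ((Finset.univ : Finset ↥C).filter (fun (c : ↥C) => (c : ℕ) ∈ ℓ v)).card = k := by
    intro v
    rw [← hk v]
    refine Finset.card_bij (fun c _ => (c : ℕ)) ?_ ?_ ?_
    · intro c hc
      exact (Finset.mem_filter.mp hc).2
    · intro c1 h1 c2 h2 h12
      exact Subtype.ext (by simpa using h12)
    · intro x hx
      exact ⟨⟨x, hsub v hx⟩, Finset.mem_filter.mpr ⟨Finset.mem_univ _, hx⟩, rfl⟩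
  have hbadcard : ∀ v, ((bad v).card : ℚ) ≤ 2 ^ a' * ((t : ℚ) - 1/2) ^ k * t ^ (M - k) := by
    intro v
    set w : ↥C → Fin t → ℚ := fun c x => if ((c : ℕ) ∈ ℓ v ∧ x = φ v) then 1/2 else 1 with hwdef
    have hwn : ∀ c x, 0 ≤ w c x := by
      intro c x; simp only [hwdef]; split <;> norm_num
    have hprod : ∀ g : ↥C → Fin t, (∏ c : ↥C, w c (g c))
        = (1/2 : ℚ) ^ ((Finset.univ : Finset ↥C).filter
            (fun (c : ↥C) => (c : ℕ) ∈ ℓ v ∧ g c = φ v)).card := by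
      intro g
      rw [Finset.prod_ite (f := fun _ => (1/2 : ℚ)) (g := fun _ => (1 : ℚ)),
        Finset.prod_const, Finset.prod_const_one, mul_one]
    have h1 : ((bad v).card : ℚ) ≤ ∑ g : ↥C → Fin t, 2 ^ a' * ∏ c : ↥C, w c (g c) := by
      rw [Finset.cast_card]
      refine le_trans (Finset.sum_le_sum (fun g hg => ?_))
        (Finset.sum_le_sum_of_subset_of_nonneg (Finset.filter_subset _ _) ?_)
      · have hX := (Finset.mem_filter.mp hg).2
        rw [hprod g]
        have : ((1:ℚ)/2) ^ a' ≤ (1/2 : ℚ) ^ ((Finset.univ : Finset ↥C).filter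
            (fun (c : ↥C) => (c : ℕ) ∈ ℓ v ∧ g c = φ v)).card :=
          pow_le_pow_of_le_one (by norm_num) (by norm_num) hX
        calc (1:ℚ) = 2 ^ a' * (1/2) ^ a' := by
              rw [div_pow, one_pow, mul_one_div, div_self (by positivity)]
        _ ≤ _ := by
              refine mul_le_mul_of_nonneg_left this (by positivity)
      · intro g _ _
        positivity
    rw [← Finset.mul_sum] at h1
    have h2 : (∑ g : ↥C → Fin t, ∏ c : ↥C, w c (g c)) = ∏ c : ↥C, ∑ x : Fin t, w c x := by
      rw [← Fintype.piFinset_univ, Finset.sum_prod_piFinset]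
    have h3 : ∀ c : ↥C, (∑ x : Fin t, w c x)
        = if (c : ℕ) ∈ ℓ v then ((t : ℚ) - 1/2) else t := by
      intro c
      by_cases hc : (c : ℕ) ∈ ℓ v
      · rw [if_pos hc]
        have : ∀ x : Fin t, w c x = 1 - (if x = φ v then (1/2 : ℚ) else 0) := by
          intro x
          simp only [hwdef, hc, true_and]
          split <;> norm_num
        rw [Finset.sum_congr rfl (fun x _ => this x), Finset.sum_sub_distrib,
          Finset.sum_const, Finset.card_univ, Fintype.card_fin,
          Fintype.sum_ite_eq' (φ v) (fun _ => (1/2 : ℚ))]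
        ring
      · rw [if_neg hc]
        have : ∀ x : Fin t, w c x = 1 := by
          intro x
          simp only [hwdef, hc, false_and, if_false]
        rw [Finset.sum_congr rfl (fun x _ => this x), Finset.sum_const, Finset.card_univ,
          Fintype.card_fin]
        simp
    have h4 : (∏ c : ↥C, ∑ x : Fin t, w c x) = ((t : ℚ) - 1/2) ^ k * (t:ℚ) ^ (M - k) := by
      rw [Finset.prod_congr rfl (fun c _ => h3 c)]
      rw [Finset.prod_ite (f := fun _ => ((t : ℚ) - 1/2)) (g := fun _ => (t : ℚ))]
      rw [Finset.prod_const, Finset.prod_const, hkfilter v]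
      congr 2
      have := Finset.card_filter_add_card_filter_not
        (s := (Finset.univ : Finset ↥C)) (p := fun (c : ↥C) => (c : ℕ) ∈ ℓ v)
      rw [Finset.card_univ, Fintype.card_coe, hkfilter v] at this
      omega
    rw [h2, h4] at h1
    calc ((bad v).card : ℚ) ≤ _ := h1
    _ = 2 ^ a' * ((t : ℚ) - 1/2) ^ k * (t:ℚ) ^ (M - k) := by ring
  -- global count
  have htotal : ((Fintype.card (↥C → Fin t) : ℚ)) ≤
      (Fintype.card V : ℚ) * (2 ^ a' * ((t : ℚ) - 1/2) ^ k * (t:ℚ) ^ (M - k)) := by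
    have h5 := le_trans (Finset.card_le_card hcov) (Finset.card_biUnion_le)
    calc ((Fintype.card (↥C → Fin t) : ℚ))
        = ((Finset.univ : Finset (↥C → Fin t)).card : ℚ) := by rw [Finset.card_univ]
    _ ≤ ((∑ v : V, (bad v).card : ℕ) : ℚ) := by exact_mod_cast h5
    _ = ∑ v : V, ((bad v).card : ℚ) := by push_cast; rfl
    _ ≤ ∑ _v : V, (2 ^ a' * ((t : ℚ) - 1/2) ^ k * (t:ℚ) ^ (M - k)) :=
        Finset.sum_le_sum (fun v _ => hbadcard v)
    _ = (Fintype.card V : ℚ) * (2 ^ a' * ((t : ℚ) - 1/2) ^ k * (t:ℚ) ^ (M - k)) := by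
        rw [Finset.sum_const, Finset.card_univ, nsmul_eq_mul]
  have hcardfun : ((Fintype.card (↥C → Fin t) : ℚ)) = (t:ℚ) ^ M := by
    rw [Fintype.card_fun, Fintype.card_coe, Fintype.card_fin]
    push_cast
    ring
  have hlt : (Fintype.card V : ℚ) * (2 ^ a' * ((t : ℚ) - 1/2) ^ k * (t:ℚ) ^ (M - k))
      < (t:ℚ) ^ M := by
    have htp : (0:ℚ) < (t:ℚ) ^ (M - k) := by
      have : (0:ℚ) < (t:ℚ) := by exact_mod_cast ht
      positivity
    have hsplit : (t:ℚ) ^ M = (t:ℚ) ^ k * (t:ℚ) ^ (M - k) := by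
      rw [← pow_add]
      congr 1
      omega
    have hre : (Fintype.card V : ℚ) * (2 ^ a' * ((t : ℚ) - 1/2) ^ k * (t:ℚ) ^ (M - k))
        = ((Fintype.card V : ℚ) * 2 ^ a' * ((t:ℚ) - 1/2) ^ k) * (t:ℚ) ^ (M - k) := by ring
    rw [hre, hsplit]
    refine mul_lt_mul_of_pos_right ?_ htp
    have h2k : (0:ℚ) < 2 ^ k := by positivity
    have key : ((Fintype.card V : ℚ) * 2 ^ a' * ((t:ℚ) - 1/2) ^ k) * 2 ^ k
        < (t:ℚ) ^ k * 2 ^ k := by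
      have e1 : ((Fintype.card V : ℚ) * 2 ^ a' * ((t:ℚ) - 1/2) ^ k) * 2 ^ k
          = (Fintype.card V : ℚ) * 2 ^ a' * (((2 * t - 1 : ℕ)) : ℚ) ^ k := by
        rw [mul_assoc, ← mul_pow]
        congr 2
        push_cast [Nat.cast_sub (show 1 ≤ 2 * t by omega)]
        ring
      have e2 : (t:ℚ) ^ k * 2 ^ k = (((2 * t : ℕ)):ℚ) ^ k := by
        rw [← mul_pow]
        push_cast
        ring_nf
      rw [e1, e2]
      exact hnum
    exact (mul_lt_mul_iff_of_pos_right h2k).mp key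
  rw [hcardfun] at htotal
  exact absurd (lt_of_le_of_lt htotal hlt) (lt_irrefl _)

lemma choose_two_ge (t : ℕ) (ht : 1 ≤ t) : 4 * (2*t - 1)^2 ≤ (6*t).choose 2 := by
  have h2 : (6*t).choose 2 * 2 = (6*t) * (6*t - 1) := by
    rw [Nat.choose_two_right]
    have : 2 ∣ (6*t) * (6*t - 1) := by
      rcases Nat.even_or_odd (6*t) with he | ho
      · exact Dvd.dvd.mul_right he.two_dvd _
      · exact Dvd.dvd.mul_left (Nat.Odd.sub_odd ho odd_one).two_dvd _
    omega
  have h3 : 8 * (2*t - 1)^2 ≤ (6*t) * (6*t - 1) := by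
    obtain ⟨s, rfl⟩ := Nat.exists_eq_add_of_le ht
    have e1 : 2*(1+s) - 1 = 2*s + 1 := by omega
    have e2 : 6*(1+s) - 1 = 6*s + 5 := by omega
    rw [e1, e2]
    nlinarith [sq_nonneg s]
  have h4 : 2 * (4 * (2*t-1)^2) ≤ 2 * ((6*t).choose 2) := by
    calc 2 * (4*(2*t-1)^2) = 8 * (2*t-1)^2 := by ring
    _ ≤ (6*t) * (6*t-1) := h3
    _ = (6*t).choose 2 * 2 := h2.symm
    _ = 2 * ((6*t).choose 2) := by ring
  exact Nat.le_of_mul_le_mul_left h4 (by norm_num)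

lemma choose_three_ge (t : ℕ) (ht : 1 ≤ t) : 4 * (2*t - 1)^3 ≤ (6*t).choose 3 := by
  have h2 : (6*t).choose 3 * 6 = (6*t) * (6*t - 1) * (6*t - 2) := by
    have hd : (6*t).descFactorial 3 = ((6*t) - 2) * (((6*t) - 1) * ((6*t) * 1)) := by
      simp [Nat.descFactorial]
    have he : (6*t).descFactorial 3 = Nat.factorial 3 * (6*t).choose 3 :=
      Nat.descFactorial_eq_factorial_mul_choose _ _
    rw [hd] at he
    have h36 : Nat.factorial 3 = 6 := by decide
    rw [h36] at he
    calc (6*t).choose 3 * 6 = 6 * (6*t).choose 3 := by ring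
    _ = ((6*t) - 2) * (((6*t) - 1) * ((6*t) * 1)) := he.symm
    _ = (6*t) * (6*t - 1) * (6*t - 2) := by ring
  have h3 : 24 * (2*t - 1)^3 ≤ (6*t) * (6*t - 1) * (6*t - 2) := by
    obtain ⟨s, rfl⟩ := Nat.exists_eq_add_of_le ht
    have e1 : 2*(1+s) - 1 = 2*s + 1 := by omega
    have e2 : 6*(1+s) - 1 = 6*s + 5 := by omega
    have e3 : 6*(1+s) - 2 = 6*s + 4 := by omega
    rw [e1, e2, e3]
    nlinarith [sq_nonneg s, pow_pos (show 0 < s+1 by omega) 3]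
  have h4 : 6 * (4 * (2*t-1)^3) ≤ 6 * ((6*t).choose 3) := by
    calc 6 * (4*(2*t-1)^3) = 24 * (2*t-1)^3 := by ring
    _ ≤ (6*t) * (6*t-1) * (6*t-2) := h3
    _ = (6*t).choose 3 * 6 := h2.symm
    _ = 6 * ((6*t).choose 3) := by ring
  exact Nat.le_of_mul_le_mul_left h4 (by norm_num)

lemma eleven_le (t : ℕ) (ht : 1 ≤ t) : 11 * (2*t - 1)^(6*t) ≤ (2*t)^(6*t) := by
  set a := 2*t - 1 with ha
  set m := 6*t with hm
  have hm6 : 6 ≤ m := by omega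
  have hexp : (2*t)^m = (a + 1)^m := by
    congr 1
    omega
  rw [hexp, add_pow]
  have hsub : ({m, m-1, m-2, m-3} : Finset ℕ) ⊆ Finset.range (m+1) := by
    intro x hx
    simp only [Finset.mem_insert, Finset.mem_singleton] at hx
    rcases hx with rfl | rfl | rfl | rfl <;> simp [Finset.mem_range] <;> omega
  have hbig : 11 * a ^ m ≤ ∑ j ∈ ({m, m-1, m-2, m-3} : Finset ℕ),
      a ^ j * 1 ^ (m - j) * (m.choose j) := by
    rw [Finset.sum_insert (by simp; omega), Finset.sum_insert (by simp; omega),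
      Finset.sum_insert (by simp; omega), Finset.sum_singleton]
    simp only [one_pow, mul_one]
    have hc0 : m.choose m = 1 := Nat.choose_self m
    have hc1 : m.choose (m-1) = m := by
      rw [Nat.choose_symm (show 1 ≤ m by omega), Nat.choose_one_right]
    have hc2 : m.choose (m-2) = m.choose 2 := Nat.choose_symm (by omega)
    have hc3 : m.choose (m-3) = m.choose 3 := Nat.choose_symm (by omega)
    rw [hc0, hc1, hc2, hc3]
    -- terms: a^m + a^{m-1} m + a^{m-2} C2 + a^{m-3} C3 ≥ (1+3+4+4) a^m
    have e1 : a ^ m = a ^ (m-1) * a := by rw [← pow_succ]; congr 1; omega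
    have e1' : a ^ m = a ^ (m-2) * a^2 := by rw [← pow_add]; congr 1; omega
    have e1'' : a ^ m = a ^ (m-3) * a^3 := by rw [← pow_add]; congr 1; omega
    have t1 : 3 * a ^ m ≤ a ^ (m-1) * m := by
      rw [e1]
      have : 3 * a ≤ m := by omega
      calc 3 * (a ^ (m-1) * a) = a ^ (m-1) * (3 * a) := by ring
      _ ≤ a ^ (m-1) * m := Nat.mul_le_mul_left _ this
    have t2 : 4 * a ^ m ≤ a ^ (m-2) * m.choose 2 := by
      rw [e1']
      have := choose_two_ge t ht
      calc 4 * (a ^ (m-2) * a^2) = a ^ (m-2) * (4 * a^2) := by ring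
      _ ≤ a ^ (m-2) * m.choose 2 := Nat.mul_le_mul_left _ (by rw [hm]; rw [ha] at *; omega)
    have t3 : 4 * a ^ m ≤ a ^ (m-3) * m.choose 3 := by
      rw [e1'']
      have := choose_three_ge t ht
      calc 4 * (a ^ (m-3) * a^3) = a ^ (m-3) * (4 * a^3) := by ring
      _ ≤ a ^ (m-3) * m.choose 3 := Nat.mul_le_mul_left _ (by rw [hm]; rw [ha] at *; omega)
    omega
  refine le_trans hbig ?_
  refine Finset.sum_le_sum_of_subset hsub

lemma pow_eleven (L : ℕ) (hL : 4 ≤ L) : 2^(3*L+5) ≤ 11^(L+1) := by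
  induction L with
  | zero => omega
  | succ m ih =>
    rcases Nat.lt_or_ge m 4 with hm | hm
    · interval_cases m
      · omega
      · omega
      · omega
      · norm_num
    · have h1 := ih hm
      have e1 : 3*(m+1)+5 = (3*m+5) + 3 := by omega
      have e2 : (m+1)+1 = (m+1) + 1 := rfl
      rw [e1, pow_add, pow_succ]
      calc 2^(3*m+5) * 2^3 ≤ 11^(m+1) * 2^3 := Nat.mul_le_mul_right _ h1
      _ ≤ 11^(m+1) * 11 := Nat.mul_le_mul_left _ (by norm_num)

lemma small_case (n : ℕ) (h1 : 1 ≤ n) (h2 : n < 16) : n ≤ 6 * (1 + Nat.log 2 n) := by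
  interval_cases n <;> decide

end Counting

end Aux

/-- `χ_ℓ(G) ≤ 6 χ⃗(G) (1 + ⌊log₂ n⌋)`. -/
theorem stmt_9 [Fintype V] (G : SimpleGraph V) :
    listChrNum G ≤ 6 * maxDichr G * (1 + Nat.log 2 (Fintype.card V)) := by
  classical
  set n := Fintype.card V with hn
  set L := Nat.log 2 n with hLdef
  set t := maxDichr G with htdef
  set k := 6 * t * (1 + L) with hkdef
  refine Nat.sInf_le ?_
  intro ℓ hℓ
  rcases Nat.eq_zero_or_pos n with hn0 | hnpos
  · have hemp : IsEmpty V := Fintype.card_eq_zero_iff.mp hn0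
    exact ⟨fun _ => 0, fun v => (hemp.false v).elim, fun u v _ _ => (hemp.false u).elim⟩
  have ht1 : 1 ≤ t := one_le_maxDichr G hnpos
  by_cases hsmall : n < 16
  · -- trivial case: k ≥ n, greedy with all lists
    have hkn : n ≤ k := by
      have h6 : n ≤ 6 * (1 + L) := small_case n hnpos hsmall
      calc n ≤ 6 * (1 + L) := h6
      _ ≤ 6 * t * (1 + L) := by nlinarith
    have hdeg : ∀ T ⊆ (Finset.univ : Finset V), T.Nonempty →
        ∃ v ∈ T, (T.filter (G.Adj v)).card ≤ n - 1 := by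
      intro T _ hTne
      obtain ⟨v, hv⟩ := hTne
      refine ⟨v, hv, ?_⟩
      have hsub : T.filter (G.Adj v) ⊆ T.erase v := by
        intro u hu
        obtain ⟨huT, hadj⟩ := Finset.mem_filter.mp hu
        exact Finset.mem_erase.mpr ⟨fun he => (G.loopless.irrefl v) (he ▸ hadj), huT⟩
      have hTn : T.card ≤ n := by
        rw [hn]
        exact le_trans (Finset.card_le_card (Finset.subset_univ T))
          (le_of_eq Finset.card_univ)
      calc (T.filter (G.Adj v)).card ≤ (T.erase v).card := Finset.card_le_card hsub
      _ = T.card - 1 := Finset.card_erase_of_mem hv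
      _ ≤ n - 1 := by omega
    have hlst : ∀ v ∈ (Finset.univ : Finset V), (n - 1) + 1 ≤ (ℓ v).card := by
      intro v _
      rw [hℓ v]
      omega
    obtain ⟨c, hc1, hc2⟩ := greedy G (n - 1) Finset.univ ℓ hdeg hlst
    exact ⟨c, fun v => hc1 v (Finset.mem_univ v),
      fun u v hadj => hc2 u (Finset.mem_univ u) v (Finset.mem_univ v) hadj⟩
  -- main case
  push_neg at hsmall
  have hL4 : 4 ≤ L := by
    have h16 : Nat.log 2 16 ≤ L := by
      rw [hLdef]
      exact Nat.log_mono_right hsmall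
    have : Nat.log 2 16 = 4 := by
      rw [show (16:ℕ) = 2^4 by norm_num, Nat.log_pow (by norm_num)]
    omega
  set β := L + 2 with hβdef
  set a' := 2 * L + 4 with ha'def
  have hnlt : n < 2 ^ (L + 1) := by
    rw [hLdef]
    exact Nat.lt_pow_succ_log_self (by norm_num) n
  have hβ : 2 * n ≤ 2 ^ β := by
    have h1 : 2 ^ β = 2 * 2 ^ (L + 1) := by
      rw [hβdef]
      ring
    omega
  obtain ⟨h, hgood⟩ := exists_good_orientation G β (by rw [← hn]; exact hβ)
  set A := orientOf G h with hAdef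
  have hor := orientOf_isOrientation G h
  obtain ⟨φ, hφ⟩ := orientation_dicolourable G hor
  set C := Finset.univ.biUnion ℓ with hCdef
  have hsubC : ∀ v, ℓ v ⊆ C := fun v x hx =>
    Finset.mem_biUnion.mpr ⟨v, Finset.mem_univ v, hx⟩
  have hneV : Nonempty V := Fintype.card_pos_iff.mp hnpos
  -- numeric inequality
  have hnumN : n * 2 ^ a' * (2 * t - 1) ^ k < (2 * t) ^ k := by
    have hpos : 0 < (2 * t - 1) ^ k := by
      have : 1 ≤ 2 * t - 1 := by omega
      positivity
    have step1 : 11 ^ (1 + L) * (2 * t - 1) ^ k ≤ (2 * t) ^ k := by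
      have e1 : (2 * t) ^ k = ((2 * t) ^ (6 * t)) ^ (1 + L) := by
        rw [← pow_mul, hkdef]
      have e2 : (2 * t - 1) ^ k = ((2 * t - 1) ^ (6 * t)) ^ (1 + L) := by
        rw [← pow_mul, hkdef]
      rw [e1, e2, ← mul_pow]
      exact Nat.pow_le_pow_left (eleven_le t ht1) (1 + L)
    have step2 : n * 2 ^ a' < 2 ^ (3 * L + 5) := by
      have e3 : 2 ^ (L + 1) * 2 ^ a' = 2 ^ (3 * L + 5) := by
        rw [← pow_add, ha'def]
        congr 1
        omega
      have := (Nat.mul_lt_mul_right (show 0 < 2 ^ a' by positivity)).mpr hnlt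
      omega
    have step3 : (2:ℕ) ^ (3 * L + 5) ≤ 11 ^ (1 + L) := by
      have := pow_eleven L hL4
      rwa [Nat.add_comm L 1] at this
    calc n * 2 ^ a' * (2 * t - 1) ^ k < 2 ^ (3 * L + 5) * (2 * t - 1) ^ k :=
          (Nat.mul_lt_mul_right hpos).mpr step2
    _ ≤ 11 ^ (1 + L) * (2 * t - 1) ^ k := Nat.mul_le_mul_right _ step3
    _ ≤ (2 * t) ^ k := step1
  have hnum : ((Fintype.card V : ℚ)) * 2 ^ a' * ((2 * t - 1 : ℕ) : ℚ) ^ k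
      < ((2 * t : ℕ) : ℚ) ^ k := by
    rw [← hn]
    exact_mod_cast hnumN
  obtain ⟨g, hg⟩ := exists_good_split t a' k ht1 C φ ℓ hℓ hsubC hneV hnum
  set ℓ' : V → Finset ℕ := fun v => (ℓ v).filter
    (fun x => ∃ hx : x ∈ C, g ⟨x, hx⟩ = φ v) with hℓ'def
  have hℓ'sub : ∀ v, ℓ' v ⊆ ℓ v := fun v => Finset.filter_subset _ _
  have hℓ'card : ∀ v, a' + 1 ≤ (ℓ' v).card := by
    intro v
    refine le_trans (hg v) (le_of_eq ?_)
    refine Finset.card_bij (fun c _ => (c : ℕ)) ?_ ?_ ?_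
    · intro c hc
      obtain ⟨-, h1, h2⟩ := Finset.mem_filter.mp hc
      exact Finset.mem_filter.mpr ⟨h1, ⟨c.2, h2⟩⟩
    · intro c1 h1 c2 h2 h12
      exact Subtype.ext (by simpa using h12)
    · intro x hx
      obtain ⟨hxl, hxC, hgx⟩ := Finset.mem_filter.mp hx
      exact ⟨⟨x, hxC⟩, Finset.mem_filter.mpr ⟨Finset.mem_univ _, hxl, hgx⟩, rfl⟩
  set W : Fin t → Finset V := fun i => Finset.univ.filter (fun v => φ v = i) with hWdef
  have hclass : ∀ i : Fin t, ∃ c : V → ℕ, (∀ v ∈ W i, c v ∈ ℓ' v) ∧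
      ∀ u ∈ W i, ∀ w ∈ W i, G.Adj u w → c u ≠ c w := by
    intro i
    refine greedy G (2 * β) (W i) ℓ' ?_ ?_
    · intro T hT hTne
      have hsubset : (↑T : Set V) ⊆ {v | φ v = i} := by
        intro x hx
        exact (Finset.mem_filter.mp (hT hx)).2
      have hacy : ¬ DiCycleIn A ↑T := fun hcy => hφ i (diCycleIn_mono hcy hsubset)
      exact exists_lowdeg G β T hTne (hgood T hacy)
    · intro v _
      have := hℓ'card v
      omega
  choose F hF1 hF2 using hclass
  refine ⟨fun v => F (φ v) v, ?_, ?_⟩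
  · intro v
    exact hℓ'sub v (hF1 (φ v) v (Finset.mem_filter.mpr ⟨Finset.mem_univ v, rfl⟩))
  · intro u v hadj heq
    by_cases hsame : φ u = φ v
    · have hu : u ∈ W (φ v) := Finset.mem_filter.mpr ⟨Finset.mem_univ u, hsame⟩
      have hv' : v ∈ W (φ v) := Finset.mem_filter.mpr ⟨Finset.mem_univ v, rfl⟩
      have hne' := hF2 (φ v) u hu v hv' hadj
      simp only [hsame] at heq
      exact hne' heq
    · have h1 := hF1 (φ u) u (Finset.mem_filter.mpr ⟨Finset.mem_univ u, rfl⟩)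
      have h2 := hF1 (φ v) v (Finset.mem_filter.mpr ⟨Finset.mem_univ v, rfl⟩)
      obtain ⟨-, hxC, hgx⟩ := Finset.mem_filter.mp h1
      obtain ⟨-, hyC, hgy⟩ := Finset.mem_filter.mp h2
      apply hsame
      rw [← hgx, ← hgy]
      congr 1
      exact Subtype.ext heq
end

section
/- Let k be a positive integer and let G be a graph with χ(G) > k. Then for every orientation G⃗ of G, the (k·ℓ⃗(G⃗)+1)-backward-blowup of G⃗ is not k-dicolourable, where ℓ⃗(G⃗) is the maximum number of arcs of a directed linear forest subdigraph of G⃗. -/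
open Set

variable {V : Type*}

lemma diCycle4 (Arc : V → V → Prop) (S : Set V) (a b c d : V)
    (hab : a ≠ b) (hac : a ≠ c) (had : a ≠ d) (hbc : b ≠ c) (hbd : b ≠ d) (hcd : c ≠ d)
    (maS : a ∈ S) (mbS : b ∈ S) (mcS : c ∈ S) (mdS : d ∈ S)
    (h1 : Arc a b) (h2 : Arc b c) (h3 : Arc c d) (h4 : Arc d a) :
    DiCycleIn Arc S := by
  refine ⟨3, ![a, b, c, d], ?_, ?_, ?_⟩
  · intro i j hij
    fin_cases i <;> fin_cases j <;> simp_all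
  · intro i; fin_cases i <;> assumption
  · intro i
    fin_cases i <;> simp_all [Fin.isValue, show (3:Fin 4)+1 = 0 from rfl]

lemma aNe {A : V → V → Prop} (hA2 : ∀ u v, A u v → ¬ A v u) {u v : V} (h : A u v) : u ≠ v :=
  fun e => hA2 u v h (e ▸ h)

lemma outCycle {n : ℕ} {A : V → V → Prop} (hA2 : ∀ u v, A u v → ¬ A v u)
    {S : Set (V × Fin n)} {u v w : V} {i j : Fin n} (hij : i ≠ j)
    (huv : A u v) (huw : A u w)
    (m1 : (u, i) ∈ S) (m2 : (v, i) ∈ S) (m3 : (u, j) ∈ S) (m4 : (w, j) ∈ S) :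
    DiCycleIn (backBlowup A n) S := by
  have huv' : u ≠ v := aNe hA2 huv
  have huw' : u ≠ w := aNe hA2 huw
  refine diCycle4 _ S (u, i) (v, i) (u, j) (w, j) ?_ ?_ ?_ ?_ ?_ ?_ m1 m2 m3 m4
    (Or.inl ⟨huv, rfl⟩) (Or.inr ⟨huv, hij⟩) (Or.inl ⟨huw, rfl⟩) (Or.inr ⟨huw, hij.symm⟩)
  all_goals simp [Prod.ext_iff]; tauto

lemma inCycle {n : ℕ} {A : V → V → Prop} (hA2 : ∀ u v, A u v → ¬ A v u)
    {S : Set (V × Fin n)} {u v w : V} {i j : Fin n} (hij : i ≠ j)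
    (huw : A u w) (hvw : A v w)
    (m1 : (u, i) ∈ S) (m2 : (w, i) ∈ S) (m3 : (v, j) ∈ S) (m4 : (w, j) ∈ S) :
    DiCycleIn (backBlowup A n) S := by
  have huw' : u ≠ w := aNe hA2 huw
  have hvw' : v ≠ w := aNe hA2 hvw
  refine diCycle4 _ S (u, i) (w, i) (v, j) (w, j) ?_ ?_ ?_ ?_ ?_ ?_ m1 m2 m3 m4
    (Or.inl ⟨huw, rfl⟩) (Or.inr ⟨hvw, hij⟩) (Or.inl ⟨hvw, rfl⟩) (Or.inr ⟨huw, hij.symm⟩)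
  all_goals simp [Prod.ext_iff]; tauto


/-- If `χ(G) > k`, then for every orientation `G⃗` of `G`, the
`(k ℓ⃗(G⃗) + 1)`-backward-blowup of `G⃗` is not `k`-dicolourable. -/
theorem stmt_10 [Fintype V] (k : ℕ) (hk : 0 < k) (G : SimpleGraph V)
    (hG : ¬ G.Colorable k) (A : V → V → Prop) (hA : IsOrientation G A) :
    ¬ Dicolourable (backBlowup A (k * linArcs A + 1)) k := by
  classical
  set ℓ := linArcs A with hℓ
  set n := k * ℓ + 1 with hn
  rintro ⟨φ, hφ⟩
  have hA2 := hA.2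
  -- Step 1 : each column has a monochromatic arc
  have step1 : ∀ i : Fin n, ∃ u v, A u v ∧ φ (u, i) = φ (v, i) := by
    intro i
    by_contra h'
    push_neg at h'
    refine hG ⟨SimpleGraph.Coloring.mk (fun v => φ (v, i)) ?_⟩
    intro u v huv heq
    rcases (hA.1 u v).1 huv with h | h
    · exact h' u v h heq
    · exact h' v u h heq.symm
  choose U W hUW hcol using step1
  -- Step 2 : pigeonhole on colours
  obtain ⟨c, hc⟩ := Fintype.exists_lt_card_fiber_of_mul_lt_card
      (fun i : Fin n => φ (U i, i)) (n := ℓ)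
      (by simp only [Fintype.card_fin]; omega)
  set T : Finset (Fin n) := Finset.univ.filter (fun i => φ (U i, i) = c) with hT
  have hTU : ∀ i ∈ T, φ (U i, i) = c := by
    intro i hi; simpa [hT] using hi
  have hTW : ∀ i ∈ T, φ (W i, i) = c := fun i hi => (hcol i).symm.trans (hTU i hi)
  -- witness-map injectivity
  have winj : ∀ i ∈ T, ∀ j ∈ T, U i = U j → W i = W j → i = j := by
    intro i hi j hj hU hW
    by_contra hij
    have hA' : A (U i) (W j) := by rw [hU]; exact hUW j
    refine hφ c (outCycle hA2 hij (hUW i) hA' ?_ ?_ ?_ ?_)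
    · exact hTU i hi
    · exact hTW i hi
    · show φ (U i, j) = c; rw [hU]; exact hTU j hj
    · exact hTW j hj
  -- the linear forest
  set B : V → V → Prop := fun u v => ∃ i, i ∈ T ∧ U i = u ∧ W i = v with hB
  have hBA : ∀ u v, B u v → A u v := by
    rintro u v ⟨i, hi, rfl, rfl⟩; exact hUW i
  have hout : ∀ u v w, B u v → B u w → v = w := by
    rintro u v w ⟨i, hi, rfl, rfl⟩ ⟨j, hj, hU, rfl⟩
    rcases eq_or_ne i j with rfl | hij
    · rfl
    · have hA' : A (U i) (W j) := by rw [← hU]; exact hUW j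
      refine absurd (outCycle hA2 hij (hUW i) hA' ?_ ?_ ?_ ?_) (hφ c)
      · exact hTU i hi
      · exact hTW i hi
      · show φ (U i, j) = c; rw [← hU]; exact hTU j hj
      · exact hTW j hj
  have hin : ∀ u v w, B u w → B v w → u = v := by
    rintro u v w ⟨i, hi, rfl, rfl⟩ ⟨j, hj, rfl, hW⟩
    rcases eq_or_ne i j with rfl | hij
    · rfl
    · have hA' : A (U j) (W i) := by rw [← hW]; exact hUW j
      refine absurd (inCycle hA2 hij (hUW i) hA' ?_ ?_ ?_ ?_) (hφ c)
      · exact hTU i hi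
      · exact hTW i hi
      · exact hTU j hj
      · show φ (W i, j) = c; rw [← hW]; exact hTW j hj
  have hacyc : AcyclicSet B Set.univ := by
    rintro ⟨m, f, finj, -, hf⟩
    match m, f, finj, hf with
    | 0, f, finj, hf =>
      have h0 := hf 0
      have he : (0 + 1 : Fin (0 + 1)) = 0 := rfl
      rw [he] at h0
      exact hA2 _ _ (hBA _ _ h0) (hBA _ _ h0)
    | m' + 1, f, finj, hf =>
      choose ι h1 h2 h3 using hf
      have consec : ∀ s : Fin (m' + 2), ι (s + 1) ≠ ι s := by
        intro s heq
        have hfs : f (s + 1) = f s := by rw [← h2 (s + 1), ← h2 s, heq]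
        have h4 : s + 1 = s := finj hfs
        have h5 : (1 : Fin (m' + 2)) = 0 := by
          have := congrArg (fun x => x - s) h4
          simpa [add_sub_cancel_left, sub_self, add_comm s 1] using this
        exact absurd (congrArg Fin.val h5) (by simp)
      refine hφ c ⟨m' + 1, fun r => (f (-r), ι (-r)), ?_, ?_, ?_⟩
      · intro r r' h
        have := finj (congrArg Prod.fst h)
        exact neg_injective this
      · intro r
        show φ (f (-r), ι (-r)) = c
        rw [← h2 (-r)]; exact hTU _ (h1 (-r))
      · intro r
        show backBlowup A n (f (-r), ι (-r)) (f (-(r + 1)), ι (-(r + 1)))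
        have e : -r = -(r + 1) + 1 := by rw [neg_add, neg_add_cancel_right]
        rw [e]
        refine Or.inr ⟨?_, consec (-(r + 1))⟩
        show A (f (-(r + 1))) (f (-(r + 1) + 1))
        rw [← h2 (-(r + 1)), ← h3 (-(r + 1))]
        exact hUW (ι (-(r + 1)))
  -- arc count
  have harc : {p : V × V | B p.1 p.2} = (fun i => (U i, W i)) '' (T : Set (Fin n)) := by
    ext ⟨u, v⟩
    simp only [Set.mem_setOf_eq, Set.mem_image, Finset.mem_coe, Prod.mk.injEq, hB]
  have hcard : arcCount B = T.card := by
    rw [arcCount, harc, Set.ncard_image_of_injOn, Set.ncard_coe_finset]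
    intro i hi j hj h
    exact winj i hi j hj (congrArg Prod.fst h) (congrArg Prod.snd h)
  have hmem : arcCount B ∈
      {m | ∃ B' : V → V → Prop, (∀ u v, B' u v → A u v) ∧ IsDilinForest B' ∧ arcCount B' = m} :=
    ⟨B, hBA, ⟨hout, hin, hacyc⟩, rfl⟩
  have hbdd : BddAbove
      {m | ∃ B' : V → V → Prop, (∀ u v, B' u v → A u v) ∧ IsDilinForest B' ∧ arcCount B' = m} := by
    refine ⟨Fintype.card (V × V), ?_⟩
    rintro m ⟨B', -, -, rfl⟩
    calc arcCount B' ≤ (Set.univ : Set (V × V)).ncard :=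
          Set.ncard_le_ncard (Set.subset_univ _) Set.finite_univ
      _ = Fintype.card (V × V) := by rw [Set.ncard_univ, Nat.card_eq_fintype_card]
  have hle : arcCount B ≤ ℓ := le_csSup hbdd hmem
  rw [hcard] at hle
  omega
end

section
/- Let k be a positive integer and let G be an n-vertex graph with χ(G) > k. Then there exists an orientation G⃗ of G such that the (k(n − α(G)) + 1)-backward-blowup of G⃗ is not k-dicolourable. -/
open Set

variable {V : Type*}

lemma fourCycle {k m : ℕ} (A : V → V → Prop) (hne : ∀ a b, A a b → a ≠ b)
    (φ : V × Fin m → Fin k) (c : Fin k) (u v w : V) (i j : Fin m)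
    (hij : i ≠ j) (huv : A u v) (huw : A u w)
    (h1 : φ (u,i) = c) (h2 : φ (v,i) = c) (h3 : φ (u,j) = c) (h4 : φ (w,j) = c) :
    DiCycleIn (backBlowup A m) {p | φ p = c} := by
  have huv' : u ≠ v := hne u v huv
  have huw' : u ≠ w := hne u w huw
  clear hne
  refine ⟨3, ![(u,i),(v,i),(u,j),(w,j)], ?_, ?_, ?_⟩
  · intro a b hab
    fin_cases a <;> fin_cases b <;> simp_all [Prod.ext_iff]
  · intro a; fin_cases a <;> simp_all
  · intro a
    fin_cases a
    · exact Or.inl ⟨huv, rfl⟩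
    · exact Or.inr ⟨huv, hij⟩
    · exact Or.inl ⟨huw, rfl⟩
    · exact Or.inr ⟨huw, hij.symm⟩


/-- If `χ(G) > k`, then some orientation of `G` has a non-`k`-dicolourable
`(k(n - α(G)) + 1)`-backward-blowup. -/
theorem stmt_11 [Fintype V] (k : ℕ) (hk : 0 < k) (G : SimpleGraph V) (n : ℕ)
    (hn : Fintype.card V = n) (hG : ¬ G.Colorable k) :
    ∃ A : V → V → Prop, IsOrientation G A ∧
      ¬ Dicolourable (backBlowup A (k * (n - indepNum G) + 1)) k := by
  classical
  -- a maximum independent set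
  have hmem : indepNum G ∈
      {k | ∃ S : Set V, (∀ u ∈ S, ∀ v ∈ S, ¬ G.Adj u v) ∧ S.ncard = k} := by
    apply Nat.sSup_mem
    · exact ⟨0, ∅, by simp, by simp⟩
    · refine ⟨Fintype.card V, ?_⟩
      rintro x ⟨S, -, rfl⟩
      simpa [Set.ncard_univ, Nat.card_eq_fintype_card] using
        Set.ncard_le_ncard (Set.subset_univ S) Set.finite_univ
  obtain ⟨S, hSind, hScard⟩ := hmem
  -- an auxiliary linear order via an injection into ℕ
  let r : V → ℕ := fun v => ((Fintype.equivFin V) v : ℕ)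
  have hr : Function.Injective r := fun a b h =>
    (Fintype.equivFin V).injective (Fin.val_injective h)
  -- the orientation: everything points into S; outside S, by the order r
  set A : V → V → Prop := fun u v => G.Adj u v ∧ (v ∈ S ∨ (u ∉ S ∧ r u < r v)) with hAdef
  have hAadj : ∀ u v, A u v → G.Adj u v := fun u v h => h.1
  have htail : ∀ u v, A u v → u ∉ S := by
    rintro u v ⟨hadj, h⟩ hu
    rcases h with hv | ⟨hu', -⟩
    · exact hSind u hu v hv hadj
    · exact hu' hu
  have hAori : IsOrientation G A := by
    constructor
    · intro u v
      constructor
      · intro hadj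
        by_cases hv : v ∈ S
        · exact Or.inl ⟨hadj, Or.inl hv⟩
        by_cases hu : u ∈ S
        · exact Or.inr ⟨hadj.symm, Or.inl hu⟩
        rcases lt_or_gt_of_ne (fun h => hadj.ne (hr h)) with h | h
        · exact Or.inl ⟨hadj, Or.inr ⟨hu, h⟩⟩
        · exact Or.inr ⟨hadj.symm, Or.inr ⟨hv, h⟩⟩
      · rintro (h | h)
        · exact h.1
        · exact h.1.symm
    · rintro u v h1 h2
      have hu : u ∉ S := htail _ _ h1
      have hv : v ∉ S := htail _ _ h2
      rcases h1.2 with h | ⟨-, hlt1⟩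
      · exact hv h
      rcases h2.2 with h | ⟨-, hlt2⟩
      · exact hu h
      exact absurd hlt2 (not_lt.2 hlt1.le)
  set m := k * (n - indepNum G) + 1 with hm
  refine ⟨A, hAori, ?_⟩
  rintro ⟨φ, hφ⟩
  -- every index has a monochromatic arc
  have key : ∀ i : Fin m, ∃ u v, A u v ∧ φ (u, i) = φ (v, i) := by
    intro i
    by_contra h
    push_neg at h
    apply hG
    refine ⟨SimpleGraph.Coloring.mk (fun v => φ (v, i)) ?_⟩
    intro u v hadj heq
    rcases (hAori.1 u v).mp hadj with h1 | h1
    · exact h u v h1 heq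
    · exact h v u h1 heq.symm
  choose u v hA hEq using key
  have hne : ∀ a b, A a b → a ≠ b := fun a b h => (hAadj a b h).ne
  -- the map i ↦ (tail, colour) is injective
  have hinj : Function.Injective
      (fun i : Fin m => ((⟨u i, htail _ _ (hA i)⟩ : {x : V // x ∉ S}), φ (u i, i))) := by
    intro i j hij'
    by_contra hij
    simp only [Prod.mk.injEq, Subtype.mk.injEq] at hij'
    obtain ⟨huu, hcc⟩ := hij'
    refine hφ (φ (u i, i)) (fourCycle A hne φ _ (u i) (v i) (v j) i j hij (hA i) ?_ rfl
      (hEq i).symm ?_ ?_)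
    · rw [huu]; exact hA j
    · rw [huu] at hcc ⊢; exact hcc.symm
    · rw [← hEq j, ← hcc]
  have hcard : m ≤ Fintype.card ({x : V // x ∉ S} × Fin k) := by
    have := Fintype.card_le_of_injective _ hinj
    simpa using this
  have hScard' : Fintype.card {x : V // x ∈ S} = indepNum G := by
    rw [← hScard, Set.ncard_eq_toFinset_card', Set.toFinset_card]
  have hcompl : Fintype.card {x : V // x ∉ S} = n - indepNum G := by
    rw [Fintype.card_subtype_compl, hScard', hn]
  rw [Fintype.card_prod, hcompl, Fintype.card_fin] at hcard
  rw [hm, mul_comm] at hcard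
  omega
end

section
/- Let ℱ be a hereditary class of graphs closed under taking subgraphs, and let d be a nonnegative integer. Then the maximum of χ⃗(G) over graphs G ∈ ℱ with maximum degree at most d is at most the maximum of χ(H) over graphs H ∈ ℱ with maximum degree at most ⌊d/2⌋ (assuming these maxima exist). -/
open Set

variable {V : Type*}

noncomputable def badCnt [Fintype V] (A : V → V → Prop) (f : V → ℕ) : ℕ :=
  Set.ncard {p : V × V | A p.1 p.2 ∧ f p.2 < f p.1}

lemma ncard_pairs_snd [Fintype V] (Q : V → Prop) (v : V) :
    Set.ncard {p : V × V | Q p.1 ∧ p.2 = v} = Set.ncard {u | Q u} := by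
  have h : {p : V × V | Q p.1 ∧ p.2 = v} = (fun u => (u, v)) '' {u | Q u} := by
    ext p
    constructor
    · rintro ⟨hq, h2⟩; exact ⟨p.1, hq, Prod.ext rfl h2.symm⟩
    · rintro ⟨u, hq, rfl⟩; exact ⟨hq, rfl⟩
  rw [h, Set.ncard_image_of_injective _ (fun a b h => congrArg Prod.fst h)]

lemma ncard_pairs_fst [Fintype V] (Q : V → Prop) (v : V) :
    Set.ncard {p : V × V | Q p.2 ∧ p.1 = v} = Set.ncard {u | Q u} := by
  have h : {p : V × V | Q p.2 ∧ p.1 = v} = (fun u => (v, u)) '' {u | Q u} := by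
    ext p
    constructor
    · rintro ⟨hq, h1⟩; exact ⟨p.2, hq, Prod.ext h1.symm rfl⟩
    · rintro ⟨u, hq, rfl⟩; exact ⟨hq, rfl⟩
  rw [h, Set.ncard_image_of_injective _ (fun a b h => congrArg Prod.snd h)]

lemma badCnt_decomp [Fintype V] (A : V → V → Prop) (f : V → ℕ) (v : V) :
    badCnt A f
      = Set.ncard {p : V × V | (A p.1 p.2 ∧ f p.2 < f p.1) ∧ p.2 = v}
      + (Set.ncard {p : V × V | ((A p.1 p.2 ∧ f p.2 < f p.1) ∧ ¬ p.2 = v) ∧ p.1 = v}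
      + Set.ncard {p : V × V | ((A p.1 p.2 ∧ f p.2 < f p.1) ∧ ¬ p.2 = v) ∧ ¬ p.1 = v}) := by
  classical
  have hd : {p : V × V | A p.1 p.2 ∧ f p.2 < f p.1}
      = {p : V × V | (A p.1 p.2 ∧ f p.2 < f p.1) ∧ p.2 = v}
      ∪ ({p : V × V | ((A p.1 p.2 ∧ f p.2 < f p.1) ∧ ¬ p.2 = v) ∧ p.1 = v}
      ∪ {p : V × V | ((A p.1 p.2 ∧ f p.2 < f p.1) ∧ ¬ p.2 = v) ∧ ¬ p.1 = v}) := by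
    ext p
    by_cases h2 : p.2 = v <;> by_cases h1 : p.1 = v <;>
      simp only [Set.mem_setOf_eq, Set.mem_union] <;> tauto
  rw [badCnt, hd, Set.ncard_union_eq, Set.ncard_union_eq]
  · rw [Set.disjoint_left]; rintro p ⟨_, h1⟩ ⟨_, h1'⟩; exact h1' h1
  · rw [Set.disjoint_left]; rintro p ⟨_, h2⟩ (⟨⟨_, h2'⟩, _⟩ | ⟨⟨_, h2'⟩, _⟩) <;> exact h2' h2

lemma exists_good_order [Fintype V] (A : V → V → Prop) (hA : ∀ u v, A u v → ¬ A v u) :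
    ∃ f : V → ℕ, Function.Injective f ∧ ∀ v : V,
      Set.ncard {u | (A u v ∧ f v < f u) ∨ (A v u ∧ f u < f v)} ≤
        (Set.ncard {u | A u v} + Set.ncard {u | A v u}) / 2 := by
  classical
  have hAv : ∀ v, ¬ A v v := fun v h => hA v v h h
  obtain ⟨f, hfinj, hfbad⟩ :=
    Nat.sInf_mem (s := {m | ∃ f : V → ℕ, Function.Injective f ∧ badCnt A f = m})
      ⟨_, fun v => ((Fintype.equivFin V) v : ℕ),
        Fin.val_injective.comp (Fintype.equivFin V).injective, rfl⟩
  have hmin : ∀ g : V → ℕ, Function.Injective g → badCnt A f ≤ badCnt A g := by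
    intro g hg; rw [hfbad]; exact Nat.sInf_le ⟨g, hg, rfl⟩
  refine ⟨f, hfinj, fun v => ?_⟩
  have hsplit : Set.ncard {u | (A u v ∧ f v < f u) ∨ (A v u ∧ f u < f v)}
      = Set.ncard {u | A u v ∧ f v < f u} + Set.ncard {u | A v u ∧ f u < f v} := by
    rw [Set.setOf_or, Set.ncard_union_eq]
    rw [Set.disjoint_left]; rintro u ⟨ha, _⟩ ⟨ha', _⟩; exact hA u v ha ha'
  rw [hsplit]
  have hT2f : {p : V × V | (A p.1 p.2 ∧ f p.2 < f p.1) ∧ p.2 = v}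
      = {p : V × V | (fun u => A u v ∧ f v < f u) p.1 ∧ p.2 = v} := by
    ext p; constructor
    · rintro ⟨⟨ha, hl⟩, h2⟩; rw [h2] at ha hl; exact ⟨⟨ha, hl⟩, h2⟩
    · rintro ⟨⟨ha, hl⟩, h2⟩; rw [← h2] at ha hl; exact ⟨⟨ha, hl⟩, h2⟩
  have hT1f : {p : V × V | ((A p.1 p.2 ∧ f p.2 < f p.1) ∧ ¬ p.2 = v) ∧ p.1 = v}
      = {p : V × V | (fun u => A v u ∧ f u < f v) p.2 ∧ p.1 = v} := by
    ext p; constructor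
    · rintro ⟨⟨⟨ha, hl⟩, _⟩, h1⟩; rw [h1] at ha hl; exact ⟨⟨ha, hl⟩, h1⟩
    · rintro ⟨⟨ha, hl⟩, h1⟩; rw [← h1] at ha hl
      exact ⟨⟨⟨ha, hl⟩, fun h => hAv v (by rw [h1, h] at ha; exact ha)⟩, h1⟩
  have hin : Set.ncard {u | A u v ∧ f v < f u} + Set.ncard {u | A v u ∧ f u < f v}
      ≤ Set.ncard {u | A u v} := by
    set f₁ : V → ℕ := fun u => if u = v then 0 else f u + 1 with hf₁
    have hf₁v : f₁ v = 0 := by simp [hf₁]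
    have hf₁n : ∀ u, ¬ u = v → f₁ u = f u + 1 := fun u hu => by simp [hf₁, hu]
    have hinj₁ : Function.Injective f₁ := by
      intro a b h
      by_cases ha : a = v <;> by_cases hb : b = v
      · rw [ha, hb]
      · rw [ha, hf₁v, hf₁n b hb] at h; omega
      · rw [hb, hf₁v, hf₁n a ha] at h; omega
      · rw [hf₁n a ha, hf₁n b hb] at h; exact hfinj (by omega)
    have h1 := badCnt_decomp A f v
    have h2 := badCnt_decomp A f₁ v
    have hC : {p : V × V | ((A p.1 p.2 ∧ f₁ p.2 < f₁ p.1) ∧ ¬ p.2 = v) ∧ ¬ p.1 = v}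
        = {p : V × V | ((A p.1 p.2 ∧ f p.2 < f p.1) ∧ ¬ p.2 = v) ∧ ¬ p.1 = v} := by
      ext p; constructor
      · rintro ⟨⟨⟨ha, hl⟩, h2'⟩, h1'⟩
        rw [hf₁n p.2 h2', hf₁n p.1 h1'] at hl
        exact ⟨⟨⟨ha, by omega⟩, h2'⟩, h1'⟩
      · rintro ⟨⟨⟨ha, hl⟩, h2'⟩, h1'⟩
        exact ⟨⟨⟨ha, by rw [hf₁n p.2 h2', hf₁n p.1 h1']; omega⟩, h2'⟩, h1'⟩
    have hT1 : {p : V × V | ((A p.1 p.2 ∧ f₁ p.2 < f₁ p.1) ∧ ¬ p.2 = v) ∧ p.1 = v}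
        = (∅ : Set (V × V)) := by
      rw [Set.eq_empty_iff_forall_notMem]
      rintro p ⟨⟨⟨ha, hl⟩, h2'⟩, h1'⟩
      rw [h1', hf₁v] at hl; omega
    have hT2 : {p : V × V | (A p.1 p.2 ∧ f₁ p.2 < f₁ p.1) ∧ p.2 = v}
        = {p : V × V | (fun u => A u v) p.1 ∧ p.2 = v} := by
      ext p; constructor
      · rintro ⟨⟨ha, _⟩, h2'⟩; rw [h2'] at ha; exact ⟨ha, h2'⟩
      · rintro ⟨ha, h2'⟩
        have h1' : ¬ p.1 = v := fun h => hAv v (by rw [h] at ha; exact ha)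
        refine ⟨⟨by rw [h2']; exact ha, ?_⟩, h2'⟩
        rw [h2', hf₁v, hf₁n p.1 h1']; omega
    have hle := hmin f₁ hinj₁
    rw [h1, h2, hT1, hT2, hC, hT1f, hT2f,
      ncard_pairs_snd (fun u => A u v ∧ f v < f u) v,
      ncard_pairs_fst (fun u => A v u ∧ f u < f v) v,
      ncard_pairs_snd (fun u => A u v) v, Set.ncard_empty] at hle
    omega
  have hout : Set.ncard {u | A u v ∧ f v < f u} + Set.ncard {u | A v u ∧ f u < f v}
      ≤ Set.ncard {u | A v u} := by
    have hlt : ∀ u : V, f u < (Finset.univ.sup f) + 1 := fun u =>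
      Nat.lt_succ_of_le (Finset.le_sup (Finset.mem_univ u))
    set f₂ : V → ℕ := fun u => if u = v then (Finset.univ.sup f) + 1 else f u with hf₂
    have hf₂v : f₂ v = (Finset.univ.sup f) + 1 := by simp [hf₂]
    have hf₂n : ∀ u, ¬ u = v → f₂ u = f u := fun u hu => by simp [hf₂, hu]
    have hinj₂ : Function.Injective f₂ := by
      intro a b h
      by_cases ha : a = v <;> by_cases hb : b = v
      · rw [ha, hb]
      · rw [ha, hf₂v, hf₂n b hb] at h; exact absurd h.symm (Nat.ne_of_lt (hlt b))
      · rw [hb, hf₂v, hf₂n a ha] at h; exact absurd h (Nat.ne_of_lt (hlt a))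
      · rw [hf₂n a ha, hf₂n b hb] at h; exact hfinj h
    have h1 := badCnt_decomp A f v
    have h2 := badCnt_decomp A f₂ v
    have hC : {p : V × V | ((A p.1 p.2 ∧ f₂ p.2 < f₂ p.1) ∧ ¬ p.2 = v) ∧ ¬ p.1 = v}
        = {p : V × V | ((A p.1 p.2 ∧ f p.2 < f p.1) ∧ ¬ p.2 = v) ∧ ¬ p.1 = v} := by
      ext p; constructor
      · rintro ⟨⟨⟨ha, hl⟩, h2'⟩, h1'⟩
        rw [hf₂n p.2 h2', hf₂n p.1 h1'] at hl
        exact ⟨⟨⟨ha, hl⟩, h2'⟩, h1'⟩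
      · rintro ⟨⟨⟨ha, hl⟩, h2'⟩, h1'⟩
        exact ⟨⟨⟨ha, by rw [hf₂n p.2 h2', hf₂n p.1 h1']; exact hl⟩, h2'⟩, h1'⟩
    have hT2 : {p : V × V | (A p.1 p.2 ∧ f₂ p.2 < f₂ p.1) ∧ p.2 = v}
        = (∅ : Set (V × V)) := by
      rw [Set.eq_empty_iff_forall_notMem]
      rintro p ⟨⟨ha, hl⟩, h2'⟩
      have h1' : ¬ p.1 = v := fun h => hAv v (by rw [h, h2'] at ha; exact ha)
      rw [h2', hf₂v, hf₂n p.1 h1'] at hl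
      exact absurd hl (not_lt_of_gt (hlt p.1))
    have hT1 : {p : V × V | ((A p.1 p.2 ∧ f₂ p.2 < f₂ p.1) ∧ ¬ p.2 = v) ∧ p.1 = v}
        = {p : V × V | (fun u => A v u) p.2 ∧ p.1 = v} := by
      ext p; constructor
      · rintro ⟨⟨⟨ha, _⟩, _⟩, h1'⟩; rw [h1'] at ha; exact ⟨ha, h1'⟩
      · rintro ⟨ha, h1'⟩
        have h2' : ¬ p.2 = v := fun h => hAv v (by rw [h] at ha; exact ha)
        refine ⟨⟨⟨by rw [h1']; exact ha, ?_⟩, h2'⟩, h1'⟩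
        rw [h1', hf₂v, hf₂n p.2 h2']; exact hlt p.2
    have hle := hmin f₂ hinj₂
    rw [h1, h2, hT1, hT2, hC, hT1f, hT2f,
      ncard_pairs_snd (fun u => A u v ∧ f v < f u) v,
      ncard_pairs_fst (fun u => A v u ∧ f u < f v) v,
      ncard_pairs_fst (fun u => A v u) v, Set.ncard_empty] at hle
    omega
  omega

/-- For a hereditary (subgraph-closed) class `F`, the maximum dichromatic number over
members of maximum degree at most `d` is at most the maximum chromatic number over
members of maximum degree at most `⌊d/2⌋`. -/
theorem stmt_17 [Fintype V] (F : Set (SimpleGraph V))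
    (hF : ∀ G ∈ F, ∀ H : SimpleGraph V, H ≤ G → H ∈ F) (d : ℕ) :
    sSup {k | ∃ G ∈ F, (∀ v, (G.neighborSet v).ncard ≤ d) ∧ maxDichr G = k} ≤
      sSup {k | ∃ H ∈ F, (∀ v, (H.neighborSet v).ncard ≤ d / 2) ∧ chrNum H = k} := by
  classical
  apply csSup_le'
  rintro k ⟨G, hG, hdeg, rfl⟩
  rw [maxDichr]
  apply csSup_le'
  rintro k ⟨A, hOr, rfl⟩
  obtain ⟨f, hfinj, hfdeg⟩ := exists_good_order A hOr.2
  let L : LinearOrder V := LinearOrder.lift' f hfinj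
  let H : SimpleGraph V := backedge A L
  have hHG : H ≤ G := by
    intro u w h
    rcases h with ⟨ha, _⟩ | ⟨ha, _⟩
    · exact (hOr.1 u w).mpr (Or.inr ha)
    · exact (hOr.1 u w).mpr (Or.inl ha)
  have hHdeg : ∀ v, (H.neighborSet v).ncard ≤ d / 2 := by
    intro v
    have h1 : H.neighborSet v = {u | (A u v ∧ f v < f u) ∨ (A v u ∧ f u < f v)} := rfl
    rw [h1]
    refine le_trans (hfdeg v) (Nat.div_le_div_right ?_)
    have h3 : G.neighborSet v = {u | A u v} ∪ {u | A v u} := by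
      ext u
      simp only [SimpleGraph.mem_neighborSet, Set.mem_union, Set.mem_setOf_eq, hOr.1 v u]
      exact or_comm
    have h4 := hdeg v
    rw [h3, Set.ncard_union_eq] at h4
    · exact h4
    · rw [Set.disjoint_left]; intro u h h'; exact hOr.2 u v h h'
  have hcol : H.Colorable (chrNum H) :=
    Nat.sInf_mem (⟨Fintype.card V, H.colorable_of_fintype⟩ :
      Set.Nonempty {k | H.Colorable k})
  obtain ⟨C⟩ := hcol
  have hdic : Dicolourable A (chrNum H) := by
    refine ⟨fun v => C v, fun c => ?_⟩
    rintro ⟨n, g, ginj, gmem, garc⟩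
    cases n with
    | zero =>
      have h0 := garc 0
      rw [show (0 : Fin 1) + 1 = 0 from rfl] at h0
      exact hOr.2 _ _ h0 h0
    | succ m =>
      obtain ⟨i₀, -, hmin⟩ := Finset.exists_min_image Finset.univ (fun i => f (g i))
        ⟨0, Finset.mem_univ 0⟩
      have harc := garc (i₀ - 1)
      rw [sub_add_cancel] at harc
      have hne : i₀ - 1 ≠ i₀ := by
        intro h
        have h2 := congrArg (· + 1) h
        simp only [sub_add_cancel] at h2
        have h3 := left_eq_add.mp h2
        have h4 := congrArg Fin.val h3
        simp [Fin.val_one] at h4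
      have hlt : f (g i₀) < f (g (i₀ - 1)) :=
        lt_of_le_of_ne (hmin (i₀ - 1) (Finset.mem_univ _))
          (fun h => hne (ginj (hfinj h)).symm)
      have hadj : H.Adj (g i₀) (g (i₀ - 1)) := Or.inl ⟨harc, hlt⟩
      exact C.valid hadj ((gmem i₀).trans (gmem (i₀ - 1)).symm)
  refine le_trans (Nat.sInf_le hdic) (le_csSup ?_ ?_)
  · refine ⟨Fintype.card V, ?_⟩
    rintro k ⟨H', _, _, rfl⟩
    exact Nat.sInf_le H'.colorable_of_fintype
  · exact ⟨H, hF G hG H hHG, hHdeg, rfl⟩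
end
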